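/- arXiv:1412.0857 — 14 statements merged into one kernel-verified Lean document; each statement's English description precedes it below -/
import Mathlib

section
/- Let G be a group and s ∈ G with conjugacy class of size exactly 2. Suppose r, ε ∈ G satisfy rs = εsr and ε ≠ 1. Then every g in the centralizer of s commutes with ε. -/
/-- The conjugacy class of `s` in a group `G`. -/
def conjClass {G : Type*} [Group G] (s : G) : Set G := {x | ∃ g : G, g * s * g⁻¹ = x}

/-- Lemma `lem:rs`(1), second part: if `s` has exactly two conjugates and
`r s = ε s r` with `ε ≠ 1`, then every element of the centralizer of `s`
commutes with `ε`. -/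
theorem stmt_1 {G : Type*} [Group G] (s r ε : G)
    (h2 : (conjClass s).ncard = 2)
    (hrs : r * s = ε * s * r) (hε : ε ≠ 1) :
    ∀ g : G, g * s = s * g → g * ε = ε * g := by
  intro g hg
  have hne : ε * s ≠ s := by
    intro h
    exact hε (mul_right_cancel (a := ε) (b := s) (c := 1) (by rw [one_mul, h]))
  have hrconj : r * s * r⁻¹ = ε * s := by
    rw [hrs]; group
  have hfin : (conjClass s).Finite := by
    by_contra h
    rw [Set.Infinite.ncard (by simpa using h)] at h2
    omega
  have hsub : ({s, ε * s} : Set G) ⊆ conjClass s := by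
    rintro x (rfl | rfl)
    · exact ⟨1, by group⟩
    · exact ⟨r, hrconj⟩
  have hcard : ({s, ε * s} : Set G).ncard = 2 := Set.ncard_pair (Ne.symm hne)
  have heq : ({s, ε * s} : Set G) = conjClass s :=
    Set.eq_of_subset_of_ncard_le hsub (by omega) hfin
  have hmem : (g * r) * s * (g * r)⁻¹ ∈ conjClass s := ⟨g * r, rfl⟩
  rw [← heq] at hmem
  have hval : (g * r) * s * (g * r)⁻¹ = g * (ε * s) * g⁻¹ := by
    rw [mul_inv_rev, show g * r * s * (r⁻¹ * g⁻¹) = g * (r * s * r⁻¹) * g⁻¹ by group,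
      hrconj]
  rw [hval] at hmem
  rcases hmem with h | h
  · exfalso
    apply hne
    have h' : ε * s = g⁻¹ * (g * (ε * s) * g⁻¹) * g := by group
    rw [h', h]
    calc g⁻¹ * s * g = g⁻¹ * (s * g) := by group
      _ = g⁻¹ * (g * s) := by rw [← hg]
      _ = s := by group
  · simp only [Set.mem_singleton_iff] at h
    have key : g * (ε * s) = (ε * s) * g := by
      calc g * (ε * s) = g * (ε * s) * g⁻¹ * g := by group
        _ = (ε * s) * g := by rw [h]
    have : g * ε * s = ε * g * s := by
      calc g * ε * s = g * (ε * s) := by group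
        _ = ε * (s * g) := by rw [key]; group
        _ = ε * (g * s) := by rw [← hg]
        _ = ε * g * s := by group
    exact mul_right_cancel this
end

section
/- Let G be a group and s ∈ G with |s^G| = 2, and r, ε ∈ G with rs = εsr and ε ≠ 1. Then for all integers m, n, the conjugacy class of εᵐsⁿ is {εᵐsⁿ, εⁿ⁻ᵐsⁿ}. -/
section

variable {G : Type*} [Group G]

lemma mem_conjClass_self (s : G) : s ∈ conjClass s := ⟨1, by group⟩

lemma conj_mem_conjClass {s x : G} (g : G) (hx : x ∈ conjClass s) :
    g * x * g⁻¹ ∈ conjClass s := by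
  obtain ⟨h, rfl⟩ := hx
  exact ⟨g * h, by group⟩

lemma conjClass_eq_pair {s t : G} (h2 : (conjClass s).ncard = 2) (ht : t ∈ conjClass s)
    (hts : t ≠ s) : conjClass s = {s, t} :=
  (Set.eq_of_subset_of_ncard_le (Set.pair_subset (mem_conjClass_self s) ht)
    (by rw [h2, Set.ncard_pair hts.symm]) (Set.finite_of_ncard_pos (by omega))).symm

lemma conj_mul_zpow (g a b : G) (m n : ℤ) :
    g * (a ^ m * b ^ n) * g⁻¹ = (g * a * g⁻¹) ^ m * (g * b * g⁻¹) ^ n := by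
  rw [conj_zpow, conj_zpow]; group

variable {s ε : G}

lemma conj_cases_of_conjClass_eq_pair (hcl : conjClass s = {s, ε * s}) (hε : ε ≠ 1) (g : G) :
    (g * s * g⁻¹ = s ∧ g * ε * g⁻¹ = ε) ∨ (g * s * g⁻¹ = ε * s ∧ g * ε * g⁻¹ = ε⁻¹) := by
  have hc : g * ε * g⁻¹ ≠ 1 := by rwa [Ne, conj_eq_one_iff]
  have hx := conj_mem_conjClass g (mem_conjClass_self s)
  have hy := conj_mem_conjClass g (hcl ▸ Set.mem_insert_of_mem s rfl : ε * s ∈ conjClass s)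
  rw [show g * (ε * s) * g⁻¹ = g * ε * g⁻¹ * (g * s * g⁻¹) by group] at hy
  rw [hcl] at hx hy
  rcases hx with hx | hx <;> rw [hx] at hy ⊢ <;> rcases hy with hy | hy
  · exact absurd (mul_eq_right.mp hy) hc
  · exact .inl ⟨rfl, mul_right_cancel hy⟩
  · refine .inr ⟨rfl, eq_inv_of_mul_eq_one_left (mul_right_cancel (b := s) ?_)⟩
    simpa [mul_assoc] using hy
  · exact absurd (mul_eq_right.mp (by simpa [mul_assoc] using hy)) hc

lemma commute_of_conjClass_eq_pair (hcl : conjClass s = {s, ε * s}) (hε : ε ≠ 1) :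
    Commute ε s := by
  rcases conj_cases_of_conjClass_eq_pair hcl hε s with ⟨-, h⟩ | ⟨h, -⟩
  · exact (mul_inv_eq_iff_eq_mul.mp h).symm
  · exact absurd (by simpa using h.symm) hε

lemma conj_zpow_mul_zpow_of_conj_eq_mul {g : G} (hcomm : Commute ε s) (hs : g * s * g⁻¹ = ε * s)
    (hε : g * ε * g⁻¹ = ε⁻¹) (m n : ℤ) : g * (ε ^ m * s ^ n) * g⁻¹ = ε ^ (n - m) * s ^ n := by
  rw [conj_mul_zpow, hs, hε, hcomm.mul_zpow, ← mul_assoc, inv_zpow', ← zpow_add, neg_add_eq_sub]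

end

/-- Lemma `lem:rs`(3): if `|s^G| = 2` and `r s = ε s r` with `ε ≠ 1`, then for
all integers `m, n` the conjugacy class of `εᵐ sⁿ` is `{εᵐ sⁿ, ε^(n-m) sⁿ}`. -/
theorem stmt_3 {G : Type*} [Group G] (s r ε : G)
    (h2 : (conjClass s).ncard = 2)
    (hrs : r * s = ε * s * r) (hε : ε ≠ 1) :
    ∀ m n : ℤ, conjClass (ε ^ m * s ^ n) = {ε ^ m * s ^ n, ε ^ (n - m) * s ^ n} := by
  have hrsr : r * s * r⁻¹ = ε * s := by rw [hrs]; group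
  have hne : ε * s ≠ s := fun h => hε (mul_eq_right.mp h)
  have hcl : conjClass s = {s, ε * s} := conjClass_eq_pair h2 ⟨r, hrsr⟩ hne
  have hcomm : Commute ε s := commute_of_conjClass_eq_pair hcl hε
  intro m n
  apply Set.Subset.antisymm
  · rintro _ ⟨g, rfl⟩
    rcases conj_cases_of_conjClass_eq_pair hcl hε g with ⟨hs, hε'⟩ | ⟨hs, hε'⟩
    · exact .inl (by rw [conj_mul_zpow, hs, hε'])
    · exact .inr (conj_zpow_mul_zpow_of_conj_eq_mul hcomm hs hε' m n)
  · refine Set.pair_subset (mem_conjClass_self _) ⟨r, ?_⟩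
    rcases conj_cases_of_conjClass_eq_pair hcl hε r with ⟨hs, -⟩ | ⟨hs, hε'⟩
    · exact absurd (hrsr.symm.trans hs) hne
    · exact conj_zpow_mul_zpow_of_conj_eq_mul hcomm hs hε' m n
end

section
/- Let G be a group and r, s, ε ∈ G such that the conjugacy classes of r and of s each have exactly 2 elements, rs = εsr, and ε ≠ 1. If additionally G is generated by the centralizer of s together with r, then ε² = 1 and ε lies in the center of G. -/
lemma two_class_aux {α : Type*} {S : Set α} (hS : S.ncard = 2) {x y : α}
    (hx : x ∈ S) (hy : y ∈ S) (hxy : x ≠ y) : ∀ z ∈ S, z = x ∨ z = y := by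
  obtain ⟨a, b, hab, rfl⟩ := Set.ncard_eq_two.mp hS
  simp only [Set.mem_insert_iff, Set.mem_singleton_iff] at hx hy ⊢
  rintro z (rfl | rfl) <;> rcases hx with rfl | rfl <;> rcases hy with rfl | rfl <;> tauto

/-- Lemma `lem:A3:222`(1): if `r` and `s` each have exactly two conjugates,
`r s = ε s r` with `ε ≠ 1`, and `G` is generated by the centralizer of `s`
together with `r`, then `ε² = 1` and `ε` is central. -/
theorem stmt_5 {G : Type*} [Group G] (r s ε : G)
    (hr2 : (conjClass r).ncard = 2) (hs2 : (conjClass s).ncard = 2)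
    (hrs : r * s = ε * s * r) (hε : ε ≠ 1)
    (hgen : Subgroup.closure ({g : G | g * s = s * g} ∪ {r}) = ⊤) :
    ε ^ 2 = 1 ∧ ε ∈ Subgroup.center G := by
  -- r s r⁻¹ = ε s
  have hconj_s : r * s * r⁻¹ = ε * s := by
    rw [hrs]; group
  -- s r s⁻¹ = ε⁻¹ r
  have hconj_r : s * r * s⁻¹ = ε⁻¹ * r := by
    have h1 : s * r = ε⁻¹ * (r * s) := by rw [hrs]; group
    calc s * r * s⁻¹ = (ε⁻¹ * (r * s)) * s⁻¹ := by rw [← h1]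
      _ = ε⁻¹ * r := by group
  have hs_mem : s ∈ conjClass s := ⟨1, by group⟩
  have hεs_mem : ε * s ∈ conjClass s := ⟨r, hconj_s⟩
  have hεs_ne : s ≠ ε * s := by
    intro h
    apply hε
    have h2 : ε * s = 1 * s := by rw [← h, one_mul]
    exact mul_right_cancel h2
  have hr_mem : r ∈ conjClass r := ⟨1, by group⟩
  have hεr_mem : ε⁻¹ * r ∈ conjClass r := ⟨s, hconj_r⟩
  have hεr_ne : r ≠ ε⁻¹ * r := by
    intro h
    apply hε
    have h2 : ε⁻¹ * r = 1 * r := by rw [← h, one_mul]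
    have h3 : ε⁻¹ = 1 := mul_right_cancel h2
    exact inv_eq_one.mp h3
  have hSclass := two_class_aux hs2 hs_mem hεs_mem hεs_ne
  have hRclass := two_class_aux hr2 hr_mem hεr_mem hεr_ne
  -- ε commutes with s
  have hεcomm : ε * s = s * ε := by
    rcases hSclass (ε * s * ε⁻¹) ⟨ε, rfl⟩ with h | h
    · calc ε * s = ε * s * ε⁻¹ * ε := by group
        _ = s * ε := by rw [h]
    · exfalso
      apply hε
      have : ε * s * ε⁻¹ * s⁻¹ = ε * s * s⁻¹ := by rw [h]
      have h2 : ε * (s * ε⁻¹ * s⁻¹) = ε * 1 := by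
        rw [mul_one]
        calc ε * (s * ε⁻¹ * s⁻¹) = ε * s * ε⁻¹ * s⁻¹ := by group
          _ = ε * s * s⁻¹ := this
          _ = ε := by group
      have h3 : s * ε⁻¹ * s⁻¹ = 1 := mul_left_cancel h2
      have : ε⁻¹ = 1 := by
        calc ε⁻¹ = s⁻¹ * (s * ε⁻¹ * s⁻¹) * s := by group
          _ = 1 := by rw [h3]; group
      rw [← inv_inv ε, this, inv_one]
  -- ε² = 1 : conjugate r by s²
  have hsq : ε ^ 2 = 1 := by
    have hmem : (s * s) * r * (s * s)⁻¹ ∈ conjClass r := ⟨s * s, rfl⟩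
    have hval : (s * s) * r * (s * s)⁻¹ = ε⁻¹ * ε⁻¹ * r := by
      have h1 : (s * s) * r * (s * s)⁻¹ = s * (s * r * s⁻¹) * s⁻¹ := by group
      rw [h1, hconj_r]
      have h2 : s * (ε⁻¹ * r) * s⁻¹ = (s * ε⁻¹ * s⁻¹) * (s * r * s⁻¹) := by group
      rw [h2, hconj_r]
      have hεinv : s * ε⁻¹ * s⁻¹ = ε⁻¹ := by
        have : s * ε⁻¹ = ε⁻¹ * s := by
          have := hεcomm
          calc s * ε⁻¹ = ε⁻¹ * (ε * s) * ε⁻¹ := by group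
            _ = ε⁻¹ * (s * ε) * ε⁻¹ := by rw [this]
            _ = ε⁻¹ * s := by group
        rw [this]; group
      rw [hεinv]; group
    rw [hval] at hmem
    rcases hRclass _ hmem with h | h
    · have : ε⁻¹ * ε⁻¹ = 1 := mul_right_cancel (b := r) (by rw [one_mul]; exact h)
      have h2 : (ε * ε)⁻¹ = 1 := by rw [mul_inv_rev]; exact this
      rw [pow_two]
      rw [← inv_inv (ε * ε), h2, inv_one]
    · exfalso
      apply hε
      have : ε⁻¹ * ε⁻¹ = ε⁻¹ := mul_right_cancel (b := r) h
      have h2 : ε⁻¹ = 1 := by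
        calc ε⁻¹ = ε * (ε⁻¹ * ε⁻¹) := by group
          _ = ε * ε⁻¹ := by rw [this]
          _ = 1 := by group
      rw [← inv_inv ε, h2, inv_one]
  refine ⟨hsq, ?_⟩
  have hεself : ε⁻¹ = ε := by
    have : ε * ε = 1 := by rw [← pow_two]; exact hsq
    calc ε⁻¹ = ε⁻¹ * (ε * ε) := by rw [this]; group
      _ = ε := by group
  -- ε commutes with r
  have hεr : r * ε = ε * r := by
    have hmem : (r * r) * s * (r * r)⁻¹ ∈ conjClass s := ⟨r * r, rfl⟩
    have hval : (r * r) * s * (r * r)⁻¹ = (r * ε * r⁻¹) * (ε * s) := by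
      calc (r * r) * s * (r * r)⁻¹ = r * (r * s * r⁻¹) * r⁻¹ := by group
        _ = r * (ε * s) * r⁻¹ := by rw [hconj_s]
        _ = (r * ε * r⁻¹) * (r * s * r⁻¹) := by group
        _ = (r * ε * r⁻¹) * (ε * s) := by rw [hconj_s]
    rw [hval] at hmem
    rcases hSclass _ hmem with h | h
    · -- (rεr⁻¹) ε s = s ⇒ rεr⁻¹ = ε⁻¹ = ε
      have h1 : r * ε * r⁻¹ = ε⁻¹ := by
        have := mul_right_cancel (b := s) (by
          calc r * ε * r⁻¹ * ε * s = (r * ε * r⁻¹) * (ε * s) := by group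
            _ = s := h
            _ = ε⁻¹ * ε * s := by group)
        exact mul_right_cancel this
      rw [hεself] at h1
      calc r * ε = r * ε * r⁻¹ * r := by group
        _ = ε * r := by rw [h1]
    · exfalso
      apply hε
      have h1 : r * ε * r⁻¹ = 1 := by
        have := mul_right_cancel (b := ε * s) (by
          calc (r * ε * r⁻¹) * (ε * s) = ε * s := h
            _ = 1 * (ε * s) := by group)
        exact this
      calc ε = r⁻¹ * (r * ε * r⁻¹) * r := by group
        _ = 1 := by rw [h1]; group
  -- ε commutes with centralizer elements
  have hεcent : ∀ g : G, g * s = s * g → g * ε = ε * g := by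
    intro g hg
    have hgs : g * s * g⁻¹ = s := by rw [hg]; group
    have hε_eq : ε = r * s * r⁻¹ * s⁻¹ := by rw [hconj_s]; group
    have hmem : g * r * g⁻¹ ∈ conjClass r := ⟨g, rfl⟩
    have key : g * ε * g⁻¹ = ε := by
      have hexp : g * ε * g⁻¹ = (g * r * g⁻¹) * s * (g * r * g⁻¹)⁻¹ * s⁻¹ := by
        rw [hε_eq]
        calc g * (r * s * r⁻¹ * s⁻¹) * g⁻¹
            = (g * r * g⁻¹) * (g * s * g⁻¹) * (g * r * g⁻¹)⁻¹ * (g * s * g⁻¹)⁻¹ := by group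
          _ = (g * r * g⁻¹) * s * (g * r * g⁻¹)⁻¹ * s⁻¹ := by rw [hgs]
      rcases hRclass _ hmem with h | h
      · rw [hexp, h, ← hε_eq]
      · rw [hexp, h, hεself]
        have hseps : s * ε * s⁻¹ = ε := by
          calc s * ε * s⁻¹ = (s * ε) * s⁻¹ := by group
            _ = (ε * s) * s⁻¹ := by rw [hεcomm]
            _ = ε := by group
        calc ε * r * s * (ε * r)⁻¹ * s⁻¹ = ε * (r * s * r⁻¹) * ε⁻¹ * s⁻¹ := by group
          _ = ε * (ε * s) * ε⁻¹ * s⁻¹ := by rw [hconj_s]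
          _ = ε * (s * ε) * ε⁻¹ * s⁻¹ := by rw [hεcomm]
          _ = ε := by group
    calc g * ε = g * ε * g⁻¹ * g := by group
      _ = ε * g := by rw [key]
  -- conclude centrality via the generating set
  rw [Subgroup.mem_center_iff]
  intro g
  have hg : g ∈ Subgroup.closure ({g : G | g * s = s * g} ∪ {r}) := by
    rw [hgen]; trivial
  induction hg using Subgroup.closure_induction with
  | mem x hx =>
      rcases hx with hx | hx
      · exact hεcent x hx
      · rw [Set.mem_singleton_iff] at hx; subst hx; exact hεr
  | one => rw [one_mul, mul_one]
  | mul x y hx hy ihx ihy =>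
      calc x * y * ε = x * (y * ε) := by group
        _ = x * (ε * y) := by rw [ihy]
        _ = (x * ε) * y := by group
        _ = (ε * x) * y := by rw [ihx]
        _ = ε * (x * y) := by group
  | inv x hx ih =>
      have : ε * x = x * ε := ih.symm
      calc x⁻¹ * ε = x⁻¹ * ε * x * x⁻¹ := by group
        _ = x⁻¹ * (ε * x) * x⁻¹ := by group
        _ = x⁻¹ * (x * ε) * x⁻¹ := by rw [this]
        _ = ε * x⁻¹ := by group
end

section
/- Let G be a group and r, s, ε ∈ G such that |r^G| = |s^G| = 2, rs = εsr, ε ≠ 1, ε is central of order dividing 2, and s^G = {s, εs}. If t ∈ G satisfies |t^G| = 2, rt = tr, and st ≠ ts, then t^G = {t, εt} and st = εts. -/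
/-- Lemma `lem:A3:222`(2): in the situation where `ε ∈ Z(G)`, `ε² = 1`,
`r^G = {r, εr}`, `s^G = {s, εs}` and `r s = ε s r`, if `t` has exactly two
conjugates, commutes with `r`, and does not commute with `s`, then
`t^G = {t, εt}` and `s t = ε t s`. -/
theorem stmt_6 {G : Type*} [Group G] (r s ε : G)
    (hcen : ε ∈ Subgroup.center G) (hε2 : ε ^ 2 = 1) (hε : ε ≠ 1)
    (hrcl : conjClass r = {r, ε * r}) (hscl : conjClass s = {s, ε * s})
    (hrs : r * s = ε * s * r)
    (t : G) (ht2 : (conjClass t).ncard = 2)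
    (hrt : r * t = t * r) (hst : s * t ≠ t * s) :
    conjClass t = {t, ε * t} ∧ s * t = ε * (t * s) := by
  have hεc : ∀ x : G, ε * x = x * ε := fun x => (Subgroup.mem_center_iff.mp hcen x).symm
  -- t s t⁻¹ ∈ conjClass s
  have h1 : t * s * t⁻¹ ∈ conjClass s := ⟨t, rfl⟩
  rw [hscl] at h1
  have h2 : t * s * t⁻¹ ≠ s := by
    intro h
    apply hst
    have : t * s = s * t := by
      have := congrArg (· * t) h
      simpa [mul_assoc] using this
    exact this.symm
  have h3 : t * s * t⁻¹ = ε * s := h1.resolve_left h2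
  have hts : t * s = ε * s * t := by
    have := congrArg (· * t) h3
    simpa [mul_assoc] using this
  have hst' : s * t = ε * (t * s) := by
    rw [hts]
    have : ε * (ε * s * t) = s * t := by
      rw [← mul_assoc, ← mul_assoc, ← sq, hε2, one_mul]
    rw [this]
  have hεt : s * t * s⁻¹ = ε * t := by
    have := congrArg (· * s⁻¹) hst'
    simp only [mul_assoc, mul_inv_cancel, mul_one] at this
    simpa [mul_assoc] using this
  have hsub : ({t, ε * t} : Set G) ⊆ conjClass t := by
    rintro x (rfl | rfl)
    · exact ⟨1, by simp⟩
    · exact ⟨s, hεt⟩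
  have hne : t ≠ ε * t := by
    intro h
    apply hε
    have := congrArg (· * t⁻¹) h
    simpa [mul_assoc] using this.symm
  have hpair : ({t, ε * t} : Set G).ncard = 2 := by
    rw [Set.ncard_pair hne]
  refine ⟨(Set.eq_of_subset_of_ncard_le hsub (by rw [ht2, hpair])
    (Set.finite_of_ncard_ne_zero (by rw [ht2]; norm_num))).symm, hst'⟩
end

section
/- Let G be a group, H ≤ G a subgroup, X ⊆ G a union of conjugacy classes with ⟨X ∪ H⟩ = G, and V a simple (irreducible) module over the group algebra KG. If every x ∈ X acts on V by scalar multiplication on each vector (i.e., xv ∈ Kv for all v ∈ V, x ∈ X), then V is simple as a KH-module by restriction. -/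
/-- Lemma `lem:simplerestriction`(1): let `G` be a group, `H ≤ G` a subgroup,
`X ⊆ G` a union of conjugacy classes with `⟨X ∪ H⟩ = G`, and `V` a simple
`KG`-module (formalized via a representation `ρ` with no nontrivial invariant
subspaces).  If every `x ∈ X` acts on each vector of `V` by a scalar, then `V`
is simple as a `KH`-module by restriction. -/
theorem stmt_8 {K G V : Type*} [Field K] [Group G]
    [AddCommGroup V] [Module K V] (ρ : Representation K G V)
    (hV : ∃ v : V, v ≠ 0)
    (hsimple : ∀ p : Submodule K V, (∀ g : G, ∀ v ∈ p, ρ g v ∈ p) → p = ⊥ ∨ p = ⊤)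
    (H : Subgroup G) (X : Set G)
    (hX : ∀ g x : G, x ∈ X → g * x * g⁻¹ ∈ X)
    (hgen : Subgroup.closure (X ∪ (H : Set G)) = ⊤)
    (hscalar : ∀ x ∈ X, ∀ v : V, ∃ lam : K, ρ x v = lam • v) :
    ∀ p : Submodule K V, (∀ h ∈ H, ∀ v ∈ p, ρ h v ∈ p) → p = ⊥ ∨ p = ⊤ := by
  intro p hp
  have key : ∀ g : G, ∀ v ∈ p, ρ g v ∈ p := by
    let S : Subgroup G :=
      { carrier := {g | ∀ v ∈ p, ρ g v ∈ p ∧ ρ g⁻¹ v ∈ p}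
        one_mem' := by intro v hv; simp [hv]
        mul_mem' := by
          intro a b ha hb v hv
          constructor
          · have : ρ (a * b) v = ρ a (ρ b v) := by simp [map_mul]
            rw [this]; exact (ha _ (hb v hv).1).1
          · have : ρ (a * b)⁻¹ v = ρ b⁻¹ (ρ a⁻¹ v) := by
              rw [mul_inv_rev]; simp [map_mul]
            rw [this]; exact (hb _ (ha v hv).2).2
        inv_mem' := by
          intro a ha v hv
          refine ⟨(ha v hv).2, ?_⟩
          simpa using (ha v hv).1 }
    have hsub : X ∪ (H : Set G) ⊆ (S : Set G) := by
      rintro g (hg | hg)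
      · intro v hv
        constructor
        · obtain ⟨lam, hl⟩ := hscalar g hg v
          rw [hl]; exact p.smul_mem _ hv
        · obtain ⟨lam, hl⟩ := hscalar g hg (ρ g⁻¹ v)
          have hv' : ρ g (ρ g⁻¹ v) = v := by
            rw [← Module.End.mul_apply, ← map_mul]; simp
          rw [hv'] at hl
          by_cases hlam : lam = 0
          · have hz : v = 0 := by rw [hl, hlam, zero_smul]
            rw [hz, map_zero]; exact p.zero_mem
          · have heq : lam⁻¹ • v = ρ g⁻¹ v := by
              nth_rewrite 1 [hl]
              rw [smul_smul, inv_mul_cancel₀ hlam, one_smul]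
            rw [← heq]; exact p.smul_mem _ hv
      · intro v hv
        exact ⟨hp g hg v hv, hp g⁻¹ (H.inv_mem hg) v hv⟩
    have : ∀ g : G, g ∈ S := by
      intro g
      have := (Subgroup.closure_le S).2 hsub
      rw [hgen] at this
      exact this (Subgroup.mem_top g)
    exact fun g v hv => (this g v hv).1
  exact hsimple p key
end

section
/- Let G be a group and t, t', ε ∈ G with t' = εt, tt' ≠ t't, |t^G| = 3, and t'^G = t^G. Then ε³ = 1, tε = ε⁻¹t, and t^G = {t, εt, ε²t}. -/
/-- Lemma `lem:3`: if `t' = εt`, `t t' ≠ t' t`, `|t^G| = 3` and `t'^G = t^G`,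
then `ε³ = 1`, `t ε = ε⁻¹ t`, and `t^G = {t, εt, ε²t}`. -/
theorem stmt_9 {G : Type*} [Group G] (t t' ε : G)
    (htt' : t' = ε * t) (hnc : t * t' ≠ t' * t)
    (h3 : (conjClass t).ncard = 3) (hcl : conjClass t' = conjClass t) :
    ε ^ 3 = 1 ∧ t * ε = ε⁻¹ * t ∧ conjClass t = {t, ε * t, ε ^ 2 * t} := by
  have hconj : ∀ (g x : G), x ∈ conjClass t → g * x * g⁻¹ ∈ conjClass t := by
    rintro g x ⟨h, rfl⟩
    exact ⟨g * h, by group⟩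
  have htmem : t ∈ conjClass t := ⟨1, by group⟩
  have ht'mem : t' ∈ conjClass t := by rw [← hcl]; exact ⟨1, by group⟩
  have hne : t ≠ t' := fun h => hnc (by rw [h])
  -- the third element of the class
  set s : G := t * ε with hsdef
  have hsmem : s ∈ conjClass t := by
    have : t * t' * t⁻¹ ∈ conjClass t := hconj t t' ht'mem
    have he : t * t' * t⁻¹ = s := by rw [htt', hsdef]; group
    rwa [he] at this
  have hst : s ≠ t := by
    intro h
    apply hne
    have hε : ε = 1 := by
      have : t * ε = t * 1 := by rw [mul_one]; exact h
      exact mul_left_cancel this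
    rw [htt', hε, one_mul]
  have hst' : s ≠ t' := by
    intro h
    apply hnc
    rw [htt']
    have : t * ε = ε * t := by rw [← htt', ← hsdef]; exact h
    calc t * (ε * t) = (t * ε) * t := by group
      _ = (ε * t) * t := by rw [this]
  have hfin : (conjClass t).Finite := by
    by_contra h
    have := Set.Infinite.ncard h
    omega
  have hcard3 : ({t, t', s} : Set G).ncard = 3 :=
    Set.ncard_eq_three.mpr ⟨t, t', s, hne, hst.symm, hst'.symm, rfl⟩
  have hset : conjClass t = {t, t', s} := by
    refine (Set.eq_of_subset_of_ncard_le ?_ ?_ hfin).symm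
    · intro x hx
      rcases hx with rfl | rfl | rfl
      · exact htmem
      · exact ht'mem
      · exact hsmem
    · rw [h3, hcard3]
  -- conjugation by t sends s to t'
  have h6 : t * s * t⁻¹ = t' := by
    have hmem : t * s * t⁻¹ ∈ conjClass t := hconj t s hsmem
    rw [hset] at hmem
    rcases hmem with h | h | h
    · exfalso
      apply hst
      calc s = t⁻¹ * (t * s * t⁻¹) * t := by group
        _ = t⁻¹ * t * t := by rw [h]
        _ = t := by group
    · exact h
    · exfalso
      apply hst'
      have hcomm : t * ε = ε * t := by
        calc t * ε = t⁻¹ * (t * (t * ε) * t⁻¹) * t := by group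
          _ = t⁻¹ * (t * ε) * t := by rw [← hsdef, h]
          _ = ε * t := by group
      rw [hsdef, hcomm, ← htt']
  -- conjugation by t' sends t to s
  have h7 : t' * t * t'⁻¹ = s := by
    have hmem : t' * t * t'⁻¹ ∈ conjClass t := hconj t' t htmem
    rw [hset] at hmem
    rcases hmem with h | h | h
    · exfalso
      apply hnc
      calc t * t' = (t' * t * t'⁻¹) * t' := by rw [h]
        _ = t' * t := by group
    · exfalso
      apply hne
      calc t = t'⁻¹ * (t' * t * t'⁻¹) * t' := by group
        _ = t'⁻¹ * t' * t' := by rw [h]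
        _ = t' := by group
    · exact h
  -- key relations
  have hA : ε * t * ε⁻¹ = t * ε := by
    rw [← hsdef, ← h7, htt']; group
  have hB : t * (t * ε) * t⁻¹ = ε * t := by
    rw [← htt', ← h6, hsdef]
  have h1 : ε * t = t * (ε * ε) := by
    calc ε * t = (ε * t * ε⁻¹) * ε := by group
      _ = (t * ε) * ε := by rw [hA]
      _ = t * (ε * ε) := by group
  have h2 : t * t * ε = ε * t * t := by rw [← hB]; group
  have key : ε * t * t = t * t * (ε * ε * ε * ε) := by
    calc ε * t * t = t * (ε * ε) * t := by rw [← h1]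
      _ = t * ε * (ε * t) := by group
      _ = t * ε * (t * (ε * ε)) := by rw [h1]
      _ = t * (ε * t) * (ε * ε) := by group
      _ = t * (t * (ε * ε)) * (ε * ε) := by rw [h1]
      _ = t * t * (ε * ε * ε * ε) := by group
  have h5 : ε = ε * ε * ε * ε := mul_left_cancel (h2.trans key)
  have h5' : ε * ε * ε = 1 := by
    calc ε * ε * ε = ε⁻¹ * (ε * ε * ε * ε) := by group
      _ = ε⁻¹ * ε := by rw [← h5]
      _ = 1 := by group
  have hε3 : ε ^ 3 = 1 := by rw [pow_succ, pow_succ, pow_one]; exact h5'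
  have hεε : ε * ε = ε⁻¹ := by
    calc ε * ε = ε⁻¹ * (ε * ε * ε) := by group
      _ = ε⁻¹ * 1 := by rw [h5']
      _ = ε⁻¹ := by group
  have h1' : ε * t = t * ε⁻¹ := by rw [← hεε]; exact h1
  have htε : t * ε = ε⁻¹ * t := by
    apply mul_left_cancel (a := ε)
    calc ε * (t * ε) = (ε * t) * ε := by group
      _ = (t * ε⁻¹) * ε := by rw [h1']
      _ = t := by group
      _ = ε * (ε⁻¹ * t) := by group
  have hε2 : ε ^ 2 = ε⁻¹ := by rw [pow_two]; exact hεε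
  refine ⟨hε3, htε, ?_⟩
  have hsval : s = ε ^ 2 * t := by rw [hsdef, hε2]; exact htε
  rw [hset, htt', hsval]
end

section
/- Let G be a group and s, t, ε ∈ G with ε ≠ 1, st ≠ ts, s^G = {s, εs}, and |t^G| = 3. Then ε³ = 1, sε = εs, tε = ε⁻¹t, ts = εst, t^G = {t, εt, ε²t}, and ε⁻¹s is central in G. -/
/-- Lemma `lem:2+3`: if `ε ≠ 1`, `s t ≠ t s`, `s^G = {s, εs}` and `|t^G| = 3`,
then `ε³ = 1`, `s ε = ε s`, `t ε = ε⁻¹ t`, `t s = ε s t`,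
`t^G = {t, εt, ε²t}`, and `ε⁻¹ s` is central. -/
theorem stmt_10 {G : Type*} [Group G] (s t ε : G)
    (hε : ε ≠ 1) (hst : s * t ≠ t * s)
    (hscl : conjClass s = {s, ε * s}) (ht3 : (conjClass t).ncard = 3) :
    ε ^ 3 = 1 ∧ s * ε = ε * s ∧ t * ε = ε⁻¹ * t ∧ t * s = ε * (s * t) ∧
      conjClass t = {t, ε * t, ε ^ 2 * t} ∧ ε⁻¹ * s ∈ Subgroup.center G := by
  -- every conjugate of s is s or ε*s
  have hs : ∀ g : G, g * s * g⁻¹ = s ∨ g * s * g⁻¹ = ε * s := by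
    intro g
    have h : g * s * g⁻¹ ∈ conjClass s := ⟨g, rfl⟩
    rw [hscl] at h
    simpa using h
  -- t s t⁻¹ = ε s
  have h4 : t * s * t⁻¹ = ε * s := by
    rcases hs t with h | h
    · exact absurd (mul_inv_eq_iff_eq_mul.mp h).symm hst
    · exact h
  -- s commutes with ε
  have hse : s * ε = ε * s := by
    have key : (s * t * s⁻¹) * s * (s * t * s⁻¹)⁻¹ = s * ε := by
      calc (s * t * s⁻¹) * s * (s * t * s⁻¹)⁻¹
          = s * (t * s * t⁻¹) * s⁻¹ := by group
        _ = s * (ε * s) * s⁻¹ := by rw [h4]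
        _ = s * ε := by group
    rcases hs (s * t * s⁻¹) with h | h
    · rw [key] at h
      exact absurd (mul_left_cancel (by rw [h, mul_one])) hε
    · rw [key] at h
      exact h
  have hseinv : s * ε⁻¹ = ε⁻¹ * s := ((Commute.inv_right (hse : Commute s ε)) : Commute s ε⁻¹)
  have hseinv' : s * ε⁻¹ * s⁻¹ = ε⁻¹ := by rw [hseinv]; group
  -- s t s⁻¹ = ε⁻¹ t
  have hsts : s * t * s⁻¹ = ε⁻¹ * t := by
    have h5 : t * s = ε * s * t := mul_inv_eq_iff_eq_mul.mp h4
    rw [mul_inv_eq_iff_eq_mul]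
    calc s * t = ε⁻¹ * (ε * s * t) := by group
      _ = ε⁻¹ * (t * s) := by rw [← h5]
      _ = ε⁻¹ * t * s := by group
  -- t ε t⁻¹ = ε⁻¹
  have hte : t * ε * t⁻¹ = ε⁻¹ := by
    have key : (t * t) * s * (t * t)⁻¹ = (t * ε * t⁻¹) * (ε * s) := by
      calc (t * t) * s * (t * t)⁻¹
          = t * (t * s * t⁻¹) * t⁻¹ := by group
        _ = t * (ε * s) * t⁻¹ := by rw [h4]
        _ = (t * ε * t⁻¹) * (t * s * t⁻¹) := by group
        _ = (t * ε * t⁻¹) * (ε * s) := by rw [h4]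
    rcases hs (t * t) with h | h
    · rw [key] at h
      have h2 : (t * ε * t⁻¹) * ε * s = 1 * s := by rw [one_mul, mul_assoc]; exact h
      have h3 : (t * ε * t⁻¹) * ε = 1 := mul_right_cancel h2
      calc t * ε * t⁻¹ = (t * ε * t⁻¹) * ε * ε⁻¹ := by group
        _ = 1 * ε⁻¹ := by rw [h3]
        _ = ε⁻¹ := by group
    · rw [key] at h
      have h2 : (t * ε * t⁻¹) * (ε * s) = 1 * (ε * s) := by rw [one_mul]; exact h
      have h3 : t * ε * t⁻¹ = 1 := mul_right_cancel h2
      have : ε = 1 := by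
        calc ε = t⁻¹ * (t * ε * t⁻¹) * t := by group
          _ = t⁻¹ * 1 * t := by rw [h3]
          _ = 1 := by group
      exact absurd this hε
  have hte' : t * ε = ε⁻¹ * t := mul_inv_eq_iff_eq_mul.mp hte
  have hteinv : t * ε⁻¹ = ε * t := by
    calc t * ε⁻¹ = ε * (ε⁻¹ * t) * ε⁻¹ := by group
      _ = ε * (t * ε) * ε⁻¹ := by rw [hte']
      _ = ε * t := by group
  -- every conjugate of ε is ε or ε⁻¹
  have hεconj : ∀ g : G, g * ε * g⁻¹ = ε ∨ g * ε * g⁻¹ = ε⁻¹ := by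
    intro g
    have key : g * ε * g⁻¹ = ((g * t) * s * (g * t)⁻¹) * (g * s * g⁻¹)⁻¹ := by
      calc g * ε * g⁻¹ = g * (ε * s) * s⁻¹ * g⁻¹ := by group
        _ = g * (t * s * t⁻¹) * s⁻¹ * g⁻¹ := by rw [h4]
        _ = ((g * t) * s * (g * t)⁻¹) * (g * s * g⁻¹)⁻¹ := by group
    rcases hs (g * t) with hA | hA <;> rcases hs g with hB | hB <;> rw [hA, hB] at key
    · exfalso
      apply hε
      calc ε = g⁻¹ * (g * ε * g⁻¹) * g := by group
        _ = g⁻¹ * (s * s⁻¹) * g := by rw [key]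
        _ = 1 := by group
    · right
      rw [key]; group
    · left
      rw [key]; group
    · exfalso
      apply hε
      calc ε = g⁻¹ * (g * ε * g⁻¹) * g := by group
        _ = g⁻¹ * (ε * s * (ε * s)⁻¹) * g := by rw [key]
        _ = 1 := by group
  -- the class of t is finite
  have hfin : (conjClass t).Finite := by
    by_contra h
    rw [Set.Infinite.ncard h] at ht3
    exact absurd ht3 (by decide)
  have htmem : t ∈ conjClass t := ⟨1, by group⟩
  -- ε² ≠ 1
  have hε2 : ε * ε ≠ 1 := by
    intro e2
    have hinv : ε⁻¹ = ε := inv_eq_of_mul_eq_one_right e2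
    have htne : t ≠ ε * t := by
      intro h
      apply hε
      have h2 : ε * t = 1 * t := by rw [one_mul, ← h]
      exact (mul_right_cancel h2)
    have hmem2 : ε * t ∈ conjClass t := ⟨s, by rw [hsts, hinv]⟩
    have hsub : ({t, ε * t} : Set G) ⊆ conjClass t := by
      intro x hx
      simp only [Set.mem_insert_iff, Set.mem_singleton_iff] at hx
      rcases hx with rfl | rfl
      · exact htmem
      · exact hmem2
    have hne_set : ({t, ε * t} : Set G) ≠ conjClass t := by
      intro hEq
      rw [← hEq, Set.ncard_pair htne] at ht3
      exact absurd ht3 (by decide)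
    obtain ⟨x, hx, hxnot⟩ := Set.exists_of_ssubset (ssubset_of_subset_of_ne hsub hne_set)
    simp only [Set.mem_insert_iff, Set.mem_singleton_iff, not_or] at hxnot
    obtain ⟨hxt, hxεt⟩ := hxnot
    obtain ⟨g, hg⟩ := hx
    -- conjClass t = {t, ε*t, x}
    have hsub3 : ({t, ε * t, x} : Set G) ⊆ conjClass t := by
      intro y hy
      simp only [Set.mem_insert_iff, Set.mem_singleton_iff] at hy
      rcases hy with rfl | rfl | rfl
      · exact htmem
      · exact hmem2
      · exact ⟨g, hg⟩
    have hcard3 : ({t, ε * t, x} : Set G).ncard = 3 :=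
      Set.ncard_eq_three.mpr ⟨t, ε * t, x, htne, Ne.symm hxt, Ne.symm hxεt, rfl⟩
    have hclsEq : conjClass t = {t, ε * t, x} :=
      (Set.eq_of_subset_of_ncard_le hsub3 (by rw [ht3, hcard3]) hfin).symm
    -- ε * x is also in the class
    have hmemεx : ε * x ∈ conjClass t := by
      refine ⟨g * s, ?_⟩
      calc (g * s) * t * (g * s)⁻¹ = g * (s * t * s⁻¹) * g⁻¹ := by group
        _ = g * (ε⁻¹ * t) * g⁻¹ := by rw [hsts]
        _ = (g * ε * g⁻¹)⁻¹ * (g * t * g⁻¹) := by group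
        _ = ε * x := by
            rcases hεconj g with hc | hc <;> rw [hc, hg]
            · rw [hinv]
            · rw [inv_inv]
    rw [hclsEq] at hmemεx
    simp only [Set.mem_insert_iff, Set.mem_singleton_iff] at hmemεx
    rcases hmemεx with h | h | h
    · apply hxεt
      calc x = ε⁻¹ * (ε * x) := by group
        _ = ε⁻¹ * t := by rw [h]
        _ = ε * t := by rw [hinv]
    · apply hxt
      have h2 : ε * x = ε * t := h
      exact mul_left_cancel h2
    · apply hε
      have h2 : ε * x = 1 * x := by rw [one_mul, h]
      exact mul_right_cancel h2
  -- the class of t is {t, ε⁻¹ t, ε⁻² t}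
  have hmem1 : ε⁻¹ * t ∈ conjClass t := ⟨s, hsts⟩
  have hmem2 : ε⁻¹ * (ε⁻¹ * t) ∈ conjClass t := by
    refine ⟨s * s, ?_⟩
    calc (s * s) * t * (s * s)⁻¹ = s * (s * t * s⁻¹) * s⁻¹ := by group
      _ = s * (ε⁻¹ * t) * s⁻¹ := by rw [hsts]
      _ = (s * ε⁻¹ * s⁻¹) * (s * t * s⁻¹) := by group
      _ = ε⁻¹ * (ε⁻¹ * t) := by rw [hseinv', hsts]
  have hne1 : t ≠ ε⁻¹ * t := by
    intro h
    apply hε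
    have h2 : ε⁻¹ * t = 1 * t := by rw [one_mul, ← h]
    have := mul_right_cancel h2
    rw [← inv_inv ε, this]; group
  have hne2 : t ≠ ε⁻¹ * (ε⁻¹ * t) := by
    intro h
    apply hε2
    have h2 : (ε * ε) * t = 1 * t := by
      rw [one_mul]
      conv_lhs => rw [h]
      group
    exact mul_right_cancel h2
  have hne3 : ε⁻¹ * t ≠ ε⁻¹ * (ε⁻¹ * t) := by
    intro h
    exact hne1 (mul_left_cancel h)
  have hsub3 : ({t, ε⁻¹ * t, ε⁻¹ * (ε⁻¹ * t)} : Set G) ⊆ conjClass t := by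
    intro y hy
    simp only [Set.mem_insert_iff, Set.mem_singleton_iff] at hy
    rcases hy with rfl | rfl | rfl
    · exact htmem
    · exact hmem1
    · exact hmem2
  have hcard3 : ({t, ε⁻¹ * t, ε⁻¹ * (ε⁻¹ * t)} : Set G).ncard = 3 :=
    Set.ncard_eq_three.mpr ⟨_, _, _, hne1, hne2, hne3, rfl⟩
  have hcls : conjClass t = {t, ε⁻¹ * t, ε⁻¹ * (ε⁻¹ * t)} :=
    (Set.eq_of_subset_of_ncard_le hsub3 (by rw [ht3, hcard3]) hfin).symm
  -- ε³ = 1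
  have e3 : ε * (ε * ε) = 1 := by
    have hmem3 : ε⁻¹ * (ε⁻¹ * (ε⁻¹ * t)) ∈ conjClass t := by
      refine ⟨s * s * s, ?_⟩
      calc (s * s * s) * t * (s * s * s)⁻¹
          = s * (s * (s * t * s⁻¹) * s⁻¹) * s⁻¹ := by group
        _ = s * (s * (ε⁻¹ * t) * s⁻¹) * s⁻¹ := by rw [hsts]
        _ = s * ((s * ε⁻¹ * s⁻¹) * (s * t * s⁻¹)) * s⁻¹ := by group
        _ = s * (ε⁻¹ * (ε⁻¹ * t)) * s⁻¹ := by rw [hseinv', hsts]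
        _ = (s * ε⁻¹ * s⁻¹) * ((s * ε⁻¹ * s⁻¹) * (s * t * s⁻¹)) := by group
        _ = ε⁻¹ * (ε⁻¹ * (ε⁻¹ * t)) := by rw [hseinv', hsts]
    rw [hcls] at hmem3
    simp only [Set.mem_insert_iff, Set.mem_singleton_iff] at hmem3
    rcases hmem3 with h | h | h
    · have h2 : (ε * (ε * ε)) * t = 1 * t := by
        rw [one_mul]
        conv_lhs => rw [← h]
        group
      exact mul_right_cancel h2
    · exfalso
      apply hε2
      have h2 : (ε * ε) * t = 1 * t := by
        rw [one_mul]
        have h3 := mul_left_cancel h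
        conv_lhs => rw [← h3]
        group
      exact mul_right_cancel h2
    · exfalso
      apply hε
      have h3 := mul_left_cancel (mul_left_cancel h)
      have h4 : ε⁻¹ * t = 1 * t := by rw [one_mul]; exact h3
      have h5 : ε⁻¹ = 1 := mul_right_cancel h4
      rw [← inv_inv ε, h5, inv_one]
  have hε3 : ε ^ 3 = 1 := by
    rw [pow_succ, sq, mul_assoc]; exact e3
  have einv : ε⁻¹ = ε * ε := inv_eq_of_mul_eq_one_right e3
  -- rewrite the class in the required form
  have hclsfinal : conjClass t = {t, ε * t, ε ^ 2 * t} := by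
    rw [hcls]
    have e1 : ε⁻¹ * t = ε ^ 2 * t := by rw [einv, sq]
    have e2 : ε⁻¹ * (ε⁻¹ * t) = ε * t := by
      rw [einv]
      calc (ε * ε) * ((ε * ε) * t) = ε * ((ε * (ε * ε)) * t) := by group
        _ = ε * (1 * t) := by rw [e3]
        _ = ε * t := by rw [one_mul]
    rw [e2, e1, Set.pair_comm (ε ^ 2 * t) (ε * t)]
  -- auxiliary lemmas on the class
  have L1 : ∀ u ∈ conjClass t, s * u * s⁻¹ = ε⁻¹ * u := by
    intro u hu
    rw [hcls] at hu
    simp only [Set.mem_insert_iff, Set.mem_singleton_iff] at hu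
    rcases hu with rfl | rfl | rfl
    · exact hsts
    · calc s * (ε⁻¹ * t) * s⁻¹ = (s * ε⁻¹ * s⁻¹) * (s * t * s⁻¹) := by group
        _ = ε⁻¹ * (ε⁻¹ * t) := by rw [hseinv', hsts]
    · calc s * (ε⁻¹ * (ε⁻¹ * t)) * s⁻¹
          = (s * ε⁻¹ * s⁻¹) * ((s * ε⁻¹ * s⁻¹) * (s * t * s⁻¹)) := by group
        _ = ε⁻¹ * (ε⁻¹ * (ε⁻¹ * t)) := by rw [hseinv', hsts]
  have L2 : ∀ u ∈ conjClass t, u * ε⁻¹ = ε * u := by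
    intro u hu
    rw [hcls] at hu
    simp only [Set.mem_insert_iff, Set.mem_singleton_iff] at hu
    rcases hu with rfl | rfl | rfl
    · exact hteinv
    · calc (ε⁻¹ * t) * ε⁻¹ = ε⁻¹ * (t * ε⁻¹) := by group
        _ = ε⁻¹ * (ε * t) := by rw [hteinv]
        _ = ε * (ε⁻¹ * t) := by group
    · calc (ε⁻¹ * (ε⁻¹ * t)) * ε⁻¹ = ε⁻¹ * (ε⁻¹ * (t * ε⁻¹)) := by group
        _ = ε⁻¹ * (ε⁻¹ * (ε * t)) := by rw [hteinv]
        _ = ε * (ε⁻¹ * (ε⁻¹ * t)) := by group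
  -- centrality of ε⁻¹ s
  have hcenter : ε⁻¹ * s ∈ Subgroup.center G := by
    rw [Subgroup.mem_center_iff]
    intro g
    have hu : g * t * g⁻¹ ∈ conjClass t := ⟨g, rfl⟩
    have key : g * (ε⁻¹ * s) * g⁻¹ = ε⁻¹ * s := by
      rcases hs g with hB | hB <;> rcases hεconj g with hC | hC
      · calc g * (ε⁻¹ * s) * g⁻¹ = (g * ε * g⁻¹)⁻¹ * (g * s * g⁻¹) := by group
          _ = ε⁻¹ * s := by rw [hB, hC]
      · -- bad case: g s g⁻¹ = s and g ε g⁻¹ = ε⁻¹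
        exfalso
        apply hε2
        have hgs : g * s = s * g := mul_inv_eq_iff_eq_mul.mp hB
        have h2 : s * (g * t * g⁻¹) * s⁻¹ = ε * (g * t * g⁻¹) := by
          calc s * (g * t * g⁻¹) * s⁻¹ = (s * g) * t * (s * g)⁻¹ := by group
            _ = (g * s) * t * (g * s)⁻¹ := by rw [hgs]
            _ = g * (s * t * s⁻¹) * g⁻¹ := by group
            _ = g * (ε⁻¹ * t) * g⁻¹ := by rw [hsts]
            _ = (g * ε * g⁻¹)⁻¹ * (g * t * g⁻¹) := by group
            _ = (ε⁻¹)⁻¹ * (g * t * g⁻¹) := by rw [hC]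
            _ = ε * (g * t * g⁻¹) := by rw [inv_inv]
        have h1 := L1 _ hu
        have h3 : ε⁻¹ * (g * t * g⁻¹) = ε * (g * t * g⁻¹) := by rw [← h1, h2]
        have h4 := mul_right_cancel h3
        calc ε * ε = ε * ε⁻¹ := by rw [h4]
          _ = 1 := by group
      · -- bad case: g s g⁻¹ = ε s and g ε g⁻¹ = ε
        exfalso
        apply hε2
        have hA : g * (s * t * s⁻¹) * g⁻¹ = ε⁻¹ * (g * t * g⁻¹) := by
          calc g * (s * t * s⁻¹) * g⁻¹ = g * (ε⁻¹ * t) * g⁻¹ := by rw [hsts]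
            _ = (g * ε * g⁻¹)⁻¹ * (g * t * g⁻¹) := by group
            _ = ε⁻¹ * (g * t * g⁻¹) := by rw [hC]
        have hB2 : g * (s * t * s⁻¹) * g⁻¹ = ε * (g * t * g⁻¹) := by
          calc g * (s * t * s⁻¹) * g⁻¹
              = (g * s * g⁻¹) * (g * t * g⁻¹) * (g * s * g⁻¹)⁻¹ := by group
            _ = (ε * s) * (g * t * g⁻¹) * (ε * s)⁻¹ := by rw [hB]
            _ = ε * (s * (g * t * g⁻¹) * s⁻¹) * ε⁻¹ := by group
            _ = ε * (ε⁻¹ * (g * t * g⁻¹)) * ε⁻¹ := by rw [L1 _ hu]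
            _ = (g * t * g⁻¹) * ε⁻¹ := by group
            _ = ε * (g * t * g⁻¹) := L2 _ hu
        have h3 : ε⁻¹ * (g * t * g⁻¹) = ε * (g * t * g⁻¹) := by rw [← hA, hB2]
        have h4 := mul_right_cancel h3
        calc ε * ε = ε * ε⁻¹ := by rw [h4]
          _ = 1 := by group
      · calc g * (ε⁻¹ * s) * g⁻¹ = (g * ε * g⁻¹)⁻¹ * (g * s * g⁻¹) := by group
          _ = (ε⁻¹)⁻¹ * (ε * s) := by rw [hB, hC]
          _ = ε * (ε * s) := by rw [inv_inv]
          _ = ε⁻¹ * s := by rw [einv]; group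
    exact (mul_inv_eq_iff_eq_mul.mp key)
  have hts : t * s = ε * (s * t) := by
    rw [← mul_assoc]
    exact mul_inv_eq_iff_eq_mul.mp h4
  exact ⟨hε3, hse, hte', hts, hclsfinal, hcenter⟩
end

section
/- Let A be an indecomposable real n×n matrix with a_{ij} ≤ 0 for all i ≠ j and with a_{ij} = 0 iff a_{ji} = 0 for i ≠ j. Then A satisfies exactly one of: (Fin) det A ≠ 0, there exists u > 0 with Au > 0, and Av ≥ 0 implies v > 0 or v = 0; (Aff) corank A = 1, there exists u > 0 with Au = 0, and Av ≥ 0 implies Av = 0; (Ind) there exists u > 0 with Au < 0, and Av ≥ 0 with v ≥ 0 implies v = 0. -/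
/-- A real square matrix is indecomposable if the index set admits no partition
into two nonempty parts with vanishing mixed entries. -/
def MatrixIndecomposable {n : ℕ} (A : Matrix (Fin n) (Fin n) ℝ) : Prop :=
  ¬ ∃ s : Set (Fin n), s.Nonempty ∧ sᶜ.Nonempty ∧
      ∀ i ∈ s, ∀ j ∈ sᶜ, A i j = 0 ∧ A j i = 0

/-- Kac's condition (Fin). -/
def KacFin {n : ℕ} (A : Matrix (Fin n) (Fin n) ℝ) : Prop :=
  A.det ≠ 0 ∧
    (∃ u : Fin n → ℝ, (∀ i, 0 < u i) ∧ ∀ i, 0 < A.mulVec u i) ∧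
    ∀ v : Fin n → ℝ, (∀ i, 0 ≤ A.mulVec v i) → (∀ i, 0 < v i) ∨ v = 0

/-- Kac's condition (Aff): `corank A = 1`, `Au = 0` for some `u > 0`, and
`Av ≥ 0` implies `Av = 0`. -/
def KacAff {n : ℕ} (A : Matrix (Fin n) (Fin n) ℝ) : Prop :=
  A.rank + 1 = n ∧
    (∃ u : Fin n → ℝ, (∀ i, 0 < u i) ∧ A.mulVec u = 0) ∧
    ∀ v : Fin n → ℝ, (∀ i, 0 ≤ A.mulVec v i) → A.mulVec v = 0

/-- Kac's condition (Ind). -/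
def KacInd {n : ℕ} (A : Matrix (Fin n) (Fin n) ℝ) : Prop :=
  (∃ u : Fin n → ℝ, (∀ i, 0 < u i) ∧ ∀ i, A.mulVec u i < 0) ∧
    ∀ v : Fin n → ℝ, (∀ i, 0 ≤ A.mulVec v i) → (∀ i, 0 ≤ v i) → v = 0

/-!
Everything rests on Kac's Lemma 4.1: if `A` has nonpositive off-diagonal entries and a strongly
connected digraph, then a vector `w ≥ 0` with `A w ≥ 0` is either `0` or strictly positive.
Applied to `w = v - m u`, with `m` the largest scalar such that `m u ≤ v` (so that `w` has a zero
coordinate), it forces `v = m u`. Given a positive eigenvector `A u = r u`, this settles each of the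
three types, and the sign of `r` decides which one holds.

Such a `u` comes from the largest `r` for which some `x` in the standard simplex has `A x ≥ r x`,
attained by compactness. The lemma applied to `A - r` gives `x > 0`; were `(A - r) x ≠ 0`, then
`A - r` would be of finite type, hence invertible, and the positive solution of `(A - r) y = 1`
would allow `r` to increase.
-/

open Matrix Finset

/-- The digraph with an edge `i → j` whenever `A i j ≠ 0` is strongly connected, phrased as:
every nonempty proper set of vertices has an outgoing edge. -/
def Matrix.IsStronglyConnected {ι R : Type*} [Zero R] (A : Matrix ι ι R) : Prop :=
  ∀ s : Set ι, s.Nonempty → sᶜ.Nonempty → ∃ i ∈ s, ∃ j ∉ s, A i j ≠ 0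

theorem MatrixIndecomposable.isStronglyConnected {n : ℕ} {A : Matrix (Fin n) (Fin n) ℝ}
    (hA : MatrixIndecomposable A) (hzero : ∀ i j, A i j = 0 → A j i = 0) :
    A.IsStronglyConnected := by
  intro s hs hsc
  by_contra! h
  exact hA ⟨s, hs, hsc, fun i hi j hj => ⟨h i hi j hj, hzero i j (h i hi j hj)⟩⟩

theorem Matrix.IsStronglyConnected.sub_smul_one {ι : Type*} [DecidableEq ι] {A : Matrix ι ι ℝ}
    (hconn : A.IsStronglyConnected) (r : ℝ) : (A - r • 1).IsStronglyConnected := by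
  intro s hs hsc
  obtain ⟨i, hi, j, hj, hij⟩ := hconn s hs hsc
  have hne : i ≠ j := by rintro rfl; exact hj hi
  exact ⟨i, hi, j, hj, by simpa [one_apply_ne hne] using hij⟩

section

variable {ι : Type*} [Fintype ι]

theorem exists_forall_mul_le_and_exists_eq [Nonempty ι] {u : ι → ℝ} (hu : ∀ i, 0 < u i)
    (v : ι → ℝ) : ∃ m : ℝ, (∀ i, m * u i ≤ v i) ∧ ∃ i, v i = m * u i := by
  obtain ⟨i₀, hi₀⟩ := Finite.exists_min fun i => v i / u i
  exact ⟨v i₀ / u i₀, fun i => (le_div_iff₀ (hu i)).1 (hi₀ i), i₀,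
    (div_mul_cancel₀ _ (hu i₀).ne').symm⟩

variable {A : Matrix ι ι ℝ}

theorem Matrix.IsStronglyConnected.pos_or_eq_zero_of_nonneg (hA : ∀ i j, i ≠ j → A i j ≤ 0)
    (hconn : A.IsStronglyConnected) {w : ι → ℝ} (hw : ∀ i, 0 ≤ w i) (hAw : ∀ i, 0 ≤ (A *ᵥ w) i) :
    (∀ i, 0 < w i) ∨ w = 0 := by
  by_contra! h
  obtain ⟨⟨i₀, hi₀⟩, hw0⟩ := h
  obtain ⟨i, hi, j, hj, hij⟩ := hconn {i | w i = 0} ⟨i₀, le_antisymm hi₀ (hw i₀)⟩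
    (Function.ne_iff.1 hw0)
  have hi : w i = 0 := hi
  have hwj : 0 < w j := (hw j).lt_of_ne' hj
  have hne : i ≠ j := by rintro rfl; exact hj hi
  have hterm : ∀ k, A i k * w k ≤ 0 := fun k => by
    rcases eq_or_ne i k with rfl | hik
    · simp [hi]
    · exact mul_nonpos_of_nonpos_of_nonneg (hA i k hik) (hw k)
  have hneg : A i j * w j < 0 := mul_neg_of_neg_of_pos ((hA i j hne).lt_of_ne hij) hwj
  have : (A *ᵥ w) i < 0 := by
    simpa [mulVec, dotProduct] using
      sum_lt_sum (fun k _ => hterm k) ⟨j, mem_univ j, hneg⟩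
  exact (hAw i).not_gt this

theorem Matrix.IsStronglyConnected.eq_smul_of_mulVec_sub_smul_nonneg
    (hA : ∀ i j, i ≠ j → A i j ≤ 0) (hconn : A.IsStronglyConnected) {u v : ι → ℝ} {m : ℝ}
    (hle : ∀ i, m * u i ≤ v i) (heq : ∃ i, v i = m * u i)
    (hAv : ∀ i, 0 ≤ (A *ᵥ (v - m • u)) i) : v = m • u := by
  obtain ⟨i, hi⟩ := heq
  have hw : ∀ k, 0 ≤ (v - m • u) k := fun k => by simpa using hle k
  rcases hconn.pos_or_eq_zero_of_nonneg hA hw hAv with hpos | hzero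
  · simpa [hi] using hpos i
  · exact sub_eq_zero.1 hzero

variable [Nonempty ι]

theorem Matrix.IsStronglyConnected.exists_eq_smul_of_mulVec_eq_zero
    (hA : ∀ i j, i ≠ j → A i j ≤ 0) (hconn : A.IsStronglyConnected) {u v : ι → ℝ}
    (hu : ∀ i, 0 < u i) (hAu : A *ᵥ u = 0) (hAv : ∀ i, 0 ≤ (A *ᵥ v) i) :
    ∃ m : ℝ, v = m • u := by
  obtain ⟨m, hle, heq⟩ := exists_forall_mul_le_and_exists_eq hu v
  exact ⟨m, hconn.eq_smul_of_mulVec_sub_smul_nonneg hA hle heq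
    (by simpa [mulVec_sub, mulVec_smul, hAu] using hAv)⟩

theorem Matrix.IsStronglyConnected.eq_zero_of_mulVec_neg
    (hA : ∀ i j, i ≠ j → A i j ≤ 0) (hconn : A.IsStronglyConnected) {u v : ι → ℝ}
    (hu : ∀ i, 0 < u i) (hAu : ∀ i, (A *ᵥ u) i < 0) (hAv : ∀ i, 0 ≤ (A *ᵥ v) i)
    (hv : ∀ i, 0 ≤ v i) : v = 0 := by
  obtain ⟨m, hle, i, hi⟩ := exists_forall_mul_le_and_exists_eq hu v
  have hm : 0 ≤ m := (mul_nonneg_iff_of_pos_right (hu i)).1 (hi ▸ hv i)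
  have hvm : v = m • u := hconn.eq_smul_of_mulVec_sub_smul_nonneg hA hle ⟨i, hi⟩ fun k => by
    simp only [mulVec_sub, mulVec_smul, Pi.sub_apply, Pi.smul_apply, smul_eq_mul]
    nlinarith [hAv k, hAu k]
  have hm0 : m = 0 := by
    have := hAv i
    simp only [hvm, mulVec_smul, Pi.smul_apply, smul_eq_mul] at this
    nlinarith [hAu i]
  simp [hvm, hm0]

theorem Matrix.IsStronglyConnected.pos_or_eq_zero_of_mulVec_nonneg
    (hA : ∀ i j, i ≠ j → A i j ≤ 0) (hconn : A.IsStronglyConnected) {u v : ι → ℝ}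
    (hu : ∀ i, 0 < u i) (hAu : ∀ i, 0 ≤ (A *ᵥ u) i) (hAu0 : A *ᵥ u ≠ 0)
    (hAv : ∀ i, 0 ≤ (A *ᵥ v) i) : (∀ i, 0 < v i) ∨ v = 0 := by
  obtain ⟨m, hle, heq⟩ := exists_forall_mul_le_and_exists_eq hu v
  rcases lt_or_ge 0 m with hm | hm
  · exact Or.inl fun i => (mul_pos hm (hu i)).trans_le (hle i)
  have hvm : v = m • u := hconn.eq_smul_of_mulVec_sub_smul_nonneg hA hle heq fun k => by
    simp only [mulVec_sub, mulVec_smul, Pi.sub_apply, Pi.smul_apply, smul_eq_mul]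
    nlinarith [hAv k, hAu k]
  obtain ⟨i, hi⟩ := Function.ne_iff.1 hAu0
  have hm0 : m = 0 := by
    have := hAv i
    simp only [hvm, mulVec_smul, Pi.smul_apply, smul_eq_mul] at this
    nlinarith [(hAu i).lt_of_ne' hi]
  simp [hvm, hm0]

theorem Matrix.det_ne_zero_of_forall_pos_or_eq_zero [DecidableEq ι]
    (h : ∀ v, (∀ i, 0 ≤ (A *ᵥ v) i) → (∀ i, 0 < v i) ∨ v = 0) : A.det ≠ 0 := by
  intro hdet
  obtain ⟨v, hv0, hAv⟩ := exists_mulVec_eq_zero_iff.2 hdet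
  obtain ⟨i⟩ := ‹Nonempty ι›
  have hpos := (h v (by simp [hAv])).resolve_right hv0
  have hneg := (h (-v) (by simp [mulVec_neg, hAv])).resolve_right (neg_ne_zero.2 hv0)
  linarith [hpos i, hneg i, show (-v) i = -v i from rfl]

theorem Matrix.IsStronglyConnected.exists_pos_mulVec_pos [DecidableEq ι]
    (hA : ∀ i j, i ≠ j → A i j ≤ 0) (hconn : A.IsStronglyConnected) {x : ι → ℝ}
    (hx : ∀ i, 0 ≤ x i) (hx0 : x ≠ 0) (hAx : ∀ i, 0 ≤ (A *ᵥ x) i) (hAx0 : A *ᵥ x ≠ 0) :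
    ∃ y : ι → ℝ, (∀ i, 0 < y i) ∧ ∀ i, 0 < (A *ᵥ y) i := by
  have hxpos := (hconn.pos_or_eq_zero_of_nonneg hA hx hAx).resolve_right hx0
  have hpos : ∀ v, (∀ i, 0 ≤ (A *ᵥ v) i) → (∀ i, 0 < v i) ∨ v = 0 :=
    fun v => hconn.pos_or_eq_zero_of_mulVec_nonneg hA hxpos hAx hAx0
  -- `A` is invertible, so `A y = 1` has a solution, which must be positive
  obtain ⟨y, hy⟩ := mulVec_surjective_iff_isUnit.2
    ((isUnit_iff_isUnit_det A).2 (det_ne_zero_of_forall_pos_or_eq_zero hpos).isUnit) 1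
  refine ⟨y, (hpos y (by simp [hy])).resolve_right ?_, by simp [hy]⟩
  rintro rfl
  simp at hy

end

section

variable {ι : Type*} [Fintype ι]

def Matrix.collatzWielandtSet (A : Matrix ι ι ℝ) : Set ℝ :=
  {r | ∃ x ∈ stdSimplex ℝ ι, ∀ i, r * x i ≤ (A *ᵥ x) i}

variable {A : Matrix ι ι ℝ}

theorem Matrix.le_sum_abs_of_mem_collatzWielandtSet {r : ℝ} (hr : r ∈ A.collatzWielandtSet) :
    r ≤ ∑ i, ∑ j, |A i j| := by
  obtain ⟨x, hx, hrx⟩ := hr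
  calc r = ∑ i, r * x i := by rw [← mul_sum, hx.2, mul_one]
    _ ≤ ∑ i, (A *ᵥ x) i := sum_le_sum fun i _ => hrx i
    _ ≤ ∑ i, ∑ j, |A i j| := sum_le_sum fun i _ => sum_le_sum fun j _ => by
        obtain ⟨hx0, hx1⟩ := mem_Icc_of_mem_stdSimplex hx j
        calc A i j * x j ≤ |A i j| * x j := mul_le_mul_of_nonneg_right (le_abs_self _) hx0
          _ ≤ |A i j| := mul_le_of_le_one_right (abs_nonneg _) hx1

variable [Nonempty ι]

theorem Matrix.mem_collatzWielandtSet_of_pos {r : ℝ} {y : ι → ℝ} (hy : ∀ i, 0 < y i)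
    (hry : ∀ i, r * y i ≤ (A *ᵥ y) i) : r ∈ A.collatzWielandtSet := by
  have hS : 0 < ∑ i, y i := sum_pos (fun i _ => hy i) univ_nonempty
  refine ⟨(∑ i, y i)⁻¹ • y, ⟨fun i => ?_, ?_⟩, fun i => ?_⟩
  · exact smul_nonneg (inv_nonneg.2 hS.le) (hy i).le
  · simp [← mul_sum, hS.ne']
  · simp only [mulVec_smul, Pi.smul_apply, smul_eq_mul, mul_left_comm r]
    exact mul_le_mul_of_nonneg_left (hry i) (inv_nonneg.2 hS.le)

theorem Matrix.exists_isGreatest_collatzWielandtSet (A : Matrix ι ι ℝ) :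
    ∃ r, IsGreatest A.collatzWielandtSet r := by
  obtain ⟨r₀, hr₀, -⟩ := exists_forall_mul_le_and_exists_eq (fun _ => one_pos) (A *ᵥ 1)
  have hr₀S : r₀ ∈ A.collatzWielandtSet :=
    mem_collatzWielandtSet_of_pos (fun _ => one_pos) hr₀
  -- the Collatz–Wielandt set above `r₀` is the projection of a compact set
  set K : Set (ℝ × (ι → ℝ)) :=
    {p | r₀ ≤ p.1 ∧ p.2 ∈ stdSimplex ℝ ι ∧ ∀ i, p.1 * p.2 i ≤ (A *ᵥ p.2) i}
  have hKclosed : IsClosed K := by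
    simp only [K, Set.ofPred_and, Set.ofPred_forall]
    refine (isClosed_le continuous_const continuous_fst).inter
      (((isClosed_stdSimplex ℝ ι).preimage continuous_snd).inter
        (isClosed_iInter fun i => isClosed_le (by fun_prop) (by fun_prop)))
  have hK : IsCompact K :=
    (isCompact_Icc.prod (isCompact_stdSimplex ℝ ι)).of_isClosed_subset hKclosed
      fun p ⟨h₀, hx, hpx⟩ => ⟨⟨h₀, le_sum_abs_of_mem_collatzWielandtSet ⟨p.2, hx, hpx⟩⟩, hx⟩
  obtain ⟨x₀, hx₀, h₀⟩ := hr₀S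
  obtain ⟨⟨r, x⟩, ⟨-, hx, hrx⟩, hmax⟩ :=
    hK.exists_isMaxOn ⟨(r₀, x₀), le_rfl, hx₀, h₀⟩ continuous_fst.continuousOn
  refine ⟨r, ⟨x, hx, hrx⟩, fun l ⟨y, hy, hly⟩ => ?_⟩
  rcases le_total r₀ l with hl | hl
  · exact hmax (a := (l, y)) ⟨hl, hy, hly⟩
  · exact hl.trans (hmax (a := (r₀, x₀)) ⟨le_rfl, hx₀, h₀⟩)

theorem Matrix.IsStronglyConnected.exists_pos_mulVec_eq_smul [DecidableEq ι]
    (hA : ∀ i j, i ≠ j → A i j ≤ 0) (hconn : A.IsStronglyConnected) :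
    ∃ u : ι → ℝ, (∀ i, 0 < u i) ∧ ∃ r : ℝ, A *ᵥ u = r • u := by
  obtain ⟨r, ⟨x, hx, hrx⟩, hmax⟩ := A.exists_isGreatest_collatzWielandtSet
  set B := A - r • 1
  have hB : ∀ i j, i ≠ j → B i j ≤ 0 := fun i j hij => by
    simpa [B, one_apply_ne hij] using hA i j hij
  have hBconn : B.IsStronglyConnected := hconn.sub_smul_one r
  have hBmulVec : ∀ y, B *ᵥ y = A *ᵥ y - r • y := fun y => by
    simp [B, sub_mulVec, smul_mulVec]
  have hBx : ∀ i, 0 ≤ (B *ᵥ x) i := fun i => by simpa [hBmulVec] using hrx i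
  have hx0 : x ≠ 0 := by
    rintro rfl
    simpa using hx.2
  have hBx0 : B *ᵥ x = 0 := by
    by_contra hne
    -- otherwise some `y > 0` has `B y ≥ δ y` with `δ > 0`, so `r + δ` beats the maximum `r`
    obtain ⟨y, hy, hBy⟩ := hBconn.exists_pos_mulVec_pos hB hx.1 hx0 hBx hne
    obtain ⟨δ, hδy, i, hi⟩ := exists_forall_mul_le_and_exists_eq hy (B *ᵥ y)
    have hδ : 0 < δ := pos_of_mul_pos_left (hi ▸ hBy i) (hy i).le
    have : r + δ ∈ A.collatzWielandtSet := mem_collatzWielandtSet_of_pos hy fun j => by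
      have := hδy j
      simp only [hBmulVec, Pi.sub_apply, Pi.smul_apply, smul_eq_mul] at this
      linarith
    linarith [hmax this]
  refine ⟨x, (hBconn.pos_or_eq_zero_of_nonneg hB hx.1 (by simp [hBx0])).resolve_right hx0, r, ?_⟩
  rwa [hBmulVec, sub_eq_zero] at hBx0

end

theorem Matrix.rank_add_one_eq_card_of_ker_eq_span {ι : Type*} [Fintype ι] {A : Matrix ι ι ℝ}
    {u : ι → ℝ} (hu : u ≠ 0) (hker : LinearMap.ker A.mulVecLin = ℝ ∙ u) :
    A.rank + 1 = Fintype.card ι := by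
  have := LinearMap.finrank_range_add_finrank_ker A.mulVecLin
  rwa [hker, finrank_span_singleton hu, Module.finrank_fintype_fun_eq_card] at this

section

variable {n : ℕ} [NeZero n] {A : Matrix (Fin n) (Fin n) ℝ}

theorem kacFin_of_pos_of_mulVec_pos (hA : ∀ i j, i ≠ j → A i j ≤ 0)
    (hconn : A.IsStronglyConnected) {u : Fin n → ℝ} (hu : ∀ i, 0 < u i)
    (hAu : ∀ i, 0 < (A *ᵥ u) i) : KacFin A := by
  have hpos : ∀ v, (∀ i, 0 ≤ (A *ᵥ v) i) → (∀ i, 0 < v i) ∨ v = 0 := fun v =>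
    hconn.pos_or_eq_zero_of_mulVec_nonneg hA hu (fun i => (hAu i).le)
      (Function.ne_iff.2 ⟨0, (hAu 0).ne'⟩)
  exact ⟨det_ne_zero_of_forall_pos_or_eq_zero hpos, ⟨u, hu, hAu⟩, hpos⟩

theorem kacAff_of_pos_of_mulVec_eq_zero (hA : ∀ i j, i ≠ j → A i j ≤ 0)
    (hconn : A.IsStronglyConnected) {u : Fin n → ℝ} (hu : ∀ i, 0 < u i)
    (hAu : A *ᵥ u = 0) : KacAff A := by
  have hsmul : ∀ v, (∀ i, 0 ≤ (A *ᵥ v) i) → ∃ m : ℝ, v = m • u := fun v =>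
    hconn.exists_eq_smul_of_mulVec_eq_zero hA hu hAu
  have hker : LinearMap.ker A.mulVecLin = ℝ ∙ u := by
    ext v
    simp only [LinearMap.mem_ker, mulVecLin_apply, Submodule.mem_span_singleton]
    constructor
    · intro hv
      obtain ⟨m, rfl⟩ := hsmul v (by simp [hv])
      exact ⟨m, rfl⟩
    · rintro ⟨m, rfl⟩
      simp [mulVec_smul, hAu]
  refine ⟨?_, ⟨u, hu, hAu⟩, fun v hv => ?_⟩
  · simpa using rank_add_one_eq_card_of_ker_eq_span (Function.ne_iff.2 ⟨0, (hu 0).ne'⟩) hker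
  · obtain ⟨m, rfl⟩ := hsmul v hv
    simp [mulVec_smul, hAu]

theorem kacInd_of_pos_of_mulVec_neg (hA : ∀ i j, i ≠ j → A i j ≤ 0)
    (hconn : A.IsStronglyConnected) {u : Fin n → ℝ} (hu : ∀ i, 0 < u i)
    (hAu : ∀ i, (A *ᵥ u) i < 0) : KacInd A :=
  ⟨⟨u, hu, hAu⟩, fun _ hAv hv => hconn.eq_zero_of_mulVec_neg hA hu hAu hAv hv⟩

theorem KacFin.not_kacAff (h : KacFin A) : ¬ KacAff A := by
  rintro ⟨-, -, hAff⟩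
  obtain ⟨-, ⟨u, -, hAu⟩, -⟩ := h
  simpa [hAff u fun i => (hAu i).le] using hAu 0

theorem KacFin.not_kacInd (h : KacFin A) : ¬ KacInd A := by
  rintro ⟨-, hInd⟩
  obtain ⟨-, ⟨u, hu, hAu⟩, -⟩ := h
  simpa [hInd u (fun i => (hAu i).le) fun i => (hu i).le] using hu 0

theorem KacAff.not_kacInd (h : KacAff A) : ¬ KacInd A := by
  rintro ⟨-, hInd⟩
  obtain ⟨-, ⟨u, hu, hAu⟩, -⟩ := h
  simpa [hInd u (by simp [hAu]) fun i => (hu i).le] using hu 0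

end

/-- Theorem `thm:CMclassification` (Kac's trichotomy): an indecomposable real
matrix with nonpositive off-diagonal entries and symmetric vanishing satisfies
exactly one of (Fin), (Aff), (Ind). -/
theorem stmt_11 {n : ℕ} (hn : 0 < n) (A : Matrix (Fin n) (Fin n) ℝ)
    (hindec : MatrixIndecomposable A)
    (hle : ∀ i j : Fin n, i ≠ j → A i j ≤ 0)
    (hzero : ∀ i j : Fin n, A i j = 0 → A j i = 0) :
    (KacFin A ∧ ¬ KacAff A ∧ ¬ KacInd A) ∨
      (¬ KacFin A ∧ KacAff A ∧ ¬ KacInd A) ∨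
      (¬ KacFin A ∧ ¬ KacAff A ∧ KacInd A) := by
  have : NeZero n := ⟨hn.ne'⟩
  have hconn := hindec.isStronglyConnected hzero
  obtain ⟨u, hu, r, hAu⟩ := hconn.exists_pos_mulVec_eq_smul hle
  rcases lt_trichotomy r 0 with hr | rfl | hr
  · have hI := kacInd_of_pos_of_mulVec_neg hle hconn hu fun i => by
      simpa [hAu] using mul_neg_of_neg_of_pos hr (hu i)
    exact Or.inr (Or.inr ⟨fun h => h.not_kacInd hI, fun h => h.not_kacInd hI, hI⟩)
  · have hAff := kacAff_of_pos_of_mulVec_eq_zero hle hconn hu (by simpa using hAu)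
    exact Or.inr (Or.inl ⟨fun h => h.not_kacAff hAff, hAff, hAff.not_kacInd⟩)
  · have hF := kacFin_of_pos_of_mulVec_pos hle hconn hu fun i => by
      simpa [hAu] using mul_pos hr (hu i)
    exact Or.inl ⟨hF, hF.not_kacAff, hF.not_kacInd⟩
end

section
/- Every connected indecomposable finite Cartan graph contains a point X whose Cartan matrix A^X is of finite type. -/
open Classical

/-- A semi-Cartan graph: a set of points `X`, involutive reflection maps
`r i : X → X`, and a generalized Cartan matrix `A x` at every point `x`,
compatible with the reflections. -/
structure SemiCartanGraph (I : Type*) [Fintype I] [DecidableEq I] where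
  X : Type*
  nonemptyX : Nonempty X
  r : I → X → X
  A : X → Matrix I I ℤ
  diag : ∀ x i, A x i i = 2
  offdiag : ∀ x i j, i ≠ j → A x i j ≤ 0
  zeroSymm : ∀ x i j, A x i j = 0 → A x j i = 0
  r_invol : ∀ i x, r i (r i x) = x
  A_compat : ∀ i x j, A (r i x) i j = A x i j

namespace SemiCartanGraph

variable {I : Type*} [Fintype I] [DecidableEq I]

/-- The reflection `s_i^x` acting on `ℤ^I`: `s_i^x (α_j) = α_j - a^x_{ij} α_i`. -/
def reflVec (C : SemiCartanGraph I) (i : I) (x : C.X) (v : I → ℤ) : I → ℤ :=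
  fun k => v k - (if k = i then ∑ j, C.A x i j * v j else 0)

/-- The real roots of `C` at a point: images of the standard basis vectors
under compositions of reflections along paths ending at the given point. -/
inductive IsRealRoot (C : SemiCartanGraph I) : C.X → (I → ℤ) → Prop
  | basis (x : C.X) (i : I) : IsRealRoot C x (Pi.single i (1 : ℤ))
  | step (x : C.X) (i : I) (v : I → ℤ) :
      IsRealRoot C x v → IsRealRoot C (C.r i x) (C.reflVec i x v)

/-- An integral generalized Cartan matrix is of finite type if it satisfies
Kac's condition (Fin) (over `ℝ`). -/
def IsFiniteType (A : Matrix I I ℤ) : Prop :=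
  (A.map (Int.cast : ℤ → ℝ)).det ≠ 0 ∧
    (∃ u : I → ℝ, (∀ i, 0 < u i) ∧
      ∀ i, 0 < (A.map (Int.cast : ℤ → ℝ)).mulVec u i) ∧
    ∀ v : I → ℝ, (∀ i, 0 ≤ (A.map (Int.cast : ℤ → ℝ)).mulVec v i) →
      (∀ i, 0 < v i) ∨ v = 0

/-- Indecomposability of a generalized Cartan matrix. -/
def IsIndecMatrix (A : Matrix I I ℤ) : Prop :=
  ¬ ∃ s : Set I, s.Nonempty ∧ sᶜ.Nonempty ∧ ∀ i ∈ s, ∀ j ∈ sᶜ, A i j = 0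

end SemiCartanGraph

/-!
Let `ρ_x` be the sum of the positive real roots at `x`. The reflection `r_i` permutes the
positive roots other than `α_i` and sends `α_i` to `-α_i`, so `ρ_{r_i x} = s_i^x ρ_x + 2 α_i`
and the coordinate sum of `ρ` changes by `2 - (A^x ρ_x)_i` along the edge. By connectedness,
real roots are transported between points by injective linear maps, so only finitely many
roots occur in the whole graph and the coordinate sum of `ρ_x` is maximal at some `x`. There
`A^x ρ_x ≥ 2` with `ρ_x ≥ 1`, and an indecomposable generalized Cartan matrix admitting such a
vector is of finite type by the usual M-matrix argument. Indecomposability holds at every point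
since, roots being positive or negative, a decomposition of `A^x` passes to `A^{r_k x}`.
-/

open Matrix

namespace Matrix

variable {n : Type*} {M : Matrix n n ℝ}

lemma mul_apply_nonpos_of_apply_eq_zero (hoff : ∀ i j, i ≠ j → M i j ≤ 0) {v : n → ℝ}
    (hv : ∀ j, 0 ≤ v j) {i : n} (hi : v i = 0) (j : n) : M i j * v j ≤ 0 := by
  by_cases hij : i = j
  · simp [← hij, hi]
  · exact mul_nonpos_of_nonpos_of_nonneg (hoff i j hij) (hv j)

variable [Fintype n]

/-- Shift `v` by the largest multiple `t • u` keeping `v - t • u ≥ 0`; at a coordinate where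
the shifted vector vanishes, `M (v - t • u)` is both positive and nonpositive. -/
lemma nonneg_of_mulVec_nonneg (hoff : ∀ i j, i ≠ j → M i j ≤ 0) {u : n → ℝ}
    (hu : ∀ i, 0 < u i) (hMu : ∀ i, 0 < (M *ᵥ u) i) {v : n → ℝ} (hMv : ∀ i, 0 ≤ (M *ᵥ v) i) :
    ∀ i, 0 ≤ v i := by
  by_contra! ⟨j, hj⟩
  obtain ⟨k, -, hk⟩ := Finset.univ.exists_min_image (fun i => v i / u i) ⟨j, Finset.mem_univ j⟩
  set t := v k / u k
  have ht : t < 0 := (hk j (Finset.mem_univ j)).trans_lt (div_neg_of_neg_of_pos hj (hu j))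
  have hw : ∀ i, 0 ≤ (v - t • u) i := fun i => by
    have := (le_div_iff₀ (hu i)).mp (hk i (Finset.mem_univ i))
    simp only [Pi.sub_apply, Pi.smul_apply, smul_eq_mul]
    linarith
  have hwk : (v - t • u) k = 0 := by
    simp [t, div_mul_cancel₀ _ (hu k).ne']
  have hpos : 0 < (M *ᵥ (v - t • u)) k := by
    simp only [mulVec_sub, mulVec_smul, Pi.sub_apply, Pi.smul_apply, smul_eq_mul]
    nlinarith [hMv k, hMu k]
  have hnonpos : (M *ᵥ (v - t • u)) k ≤ 0 :=
    Finset.sum_nonpos fun j _ => mul_apply_nonpos_of_apply_eq_zero hoff hw hwk j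
  exact hpos.not_ge hnonpos

lemma det_ne_zero_of_mulVec_pos [DecidableEq n] (hoff : ∀ i j, i ≠ j → M i j ≤ 0) {u : n → ℝ}
    (hu : ∀ i, 0 < u i) (hMu : ∀ i, 0 < (M *ᵥ u) i) : M.det ≠ 0 := by
  intro hdet
  obtain ⟨v, hv, hMv⟩ := exists_mulVec_eq_zero_iff.mpr hdet
  have hnonneg := nonneg_of_mulVec_nonneg hoff hu hMu (v := v) (by simp [hMv])
  have hnonpos := nonneg_of_mulVec_nonneg hoff hu hMu (v := -v) (by simp [mulVec_neg, hMv])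
  exact hv (funext fun i => le_antisymm (by simpa using hnonpos i) (hnonneg i))

lemma apply_eq_zero_of_mulVec_nonneg (hoff : ∀ i j, i ≠ j → M i j ≤ 0) {v : n → ℝ}
    (hv : ∀ j, 0 ≤ v j) (hMv : ∀ i, 0 ≤ (M *ᵥ v) i) {i j : n} (hi : v i = 0) (hj : v j ≠ 0) :
    M i j = 0 := by
  have hterms := mul_apply_nonpos_of_apply_eq_zero hoff hv hi
  have hzero := (Finset.sum_eq_zero_iff_of_nonpos fun j _ => hterms j).mp
    (le_antisymm (Finset.sum_nonpos fun j _ => hterms j) (hMv i)) j (Finset.mem_univ j)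
  exact (mul_eq_zero.mp hzero).resolve_right hj

end Matrix

namespace SemiCartanGraph

variable {I : Type*} [Fintype I] [DecidableEq I]

lemma isFiniteType_of_mulVec_pos {A : Matrix I I ℤ} (hoff : ∀ i j, i ≠ j → A i j ≤ 0)
    (hind : IsIndecMatrix A) {u : I → ℤ} (hu : ∀ i, 0 < u i) (hAu : ∀ i, 0 < (A *ᵥ u) i) :
    IsFiniteType A := by
  set M := A.map (Int.cast : ℤ → ℝ)
  have hoff' : ∀ i j, i ≠ j → M i j ≤ 0 := fun i j h => by simpa [M] using hoff i j h
  have hu' : ∀ i, 0 < ((↑) ∘ u : I → ℝ) i := fun i => by simpa using hu i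
  have hMu : ∀ i, 0 < (M *ᵥ ((↑) ∘ u)) i := fun i => by
    have h := (Int.castRingHom ℝ).map_mulVec A u i
    simp only [Int.coe_castRingHom] at h
    exact h ▸ Int.cast_pos.mpr (hAu i)
  refine ⟨M.det_ne_zero_of_mulVec_pos hoff' hu' hMu, ⟨_, hu', hMu⟩, fun v hMv => ?_⟩
  have hv := M.nonneg_of_mulVec_nonneg hoff' hu' hMu hMv
  by_contra! ⟨⟨i, hi⟩, hv0⟩
  have hvi : v i = 0 := le_antisymm hi (hv i)
  obtain ⟨j, hj⟩ := Function.ne_iff.mp hv0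
  exact hind ⟨{i | v i = 0}, ⟨i, hvi⟩, ⟨j, hj⟩, fun p hp q hq => by
    simpa [M] using M.apply_eq_zero_of_mulVec_nonneg hoff' hv hMv hp hq⟩

variable (C : SemiCartanGraph I)

def HasFiniteRoots : Prop :=
  ∀ x : C.X, {v : I → ℤ | C.IsRealRoot x v}.Finite

def HasSignedRoots : Prop :=
  ∀ (x : C.X) (v : I → ℤ), C.IsRealRoot x v → (∀ i, 0 ≤ v i) ∨ (∀ i, v i ≤ 0)

def IsConnected : Prop :=
  ∀ Y : Set C.X, Y.Nonempty → (∀ (i : I), ∀ x ∈ Y, C.r i x ∈ Y) → Y = Set.univ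

lemma reflVec_eq (i : I) (x : C.X) (v : I → ℤ) :
    C.reflVec i x v = v - (C.A x *ᵥ v) i • Pi.single i 1 := by
  funext k
  by_cases hk : k = i
  · subst hk; simp [reflVec, mulVec, dotProduct]
  · simp [reflVec, hk]

lemma reflVec_apply_of_ne {i k : I} (hk : k ≠ i) (x : C.X) (v : I → ℤ) :
    C.reflVec i x v k = v k := by
  simp [reflVec, hk]

lemma reflVec_apply_self (i : I) (x : C.X) (v : I → ℤ) :
    C.reflVec i x v i = v i - (C.A x *ᵥ v) i := by
  simp [reflVec_eq]

lemma mulVec_single_one_apply (x : C.X) (i j : I) :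
    (C.A x *ᵥ Pi.single j 1) i = C.A x i j := by
  simp

lemma mulVec_r_apply_self (i : I) (x : C.X) (v : I → ℤ) :
    (C.A (C.r i x) *ᵥ v) i = (C.A x *ᵥ v) i := by
  simp [mulVec, dotProduct, C.A_compat]

def reflLin (i : I) (x : C.X) : (I → ℤ) →ₗ[ℤ] (I → ℤ) where
  toFun := C.reflVec i x
  map_add' v w := by
    simp only [reflVec_eq, mulVec_add, Pi.add_apply, add_smul]
    abel
  map_smul' c v := by
    simp only [reflVec_eq, mulVec_smul, Pi.smul_apply, smul_eq_mul, mul_smul,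
      RingHom.id_apply, smul_sub]

lemma reflLin_apply (i : I) (x : C.X) (v : I → ℤ) : C.reflLin i x v = C.reflVec i x v := rfl

lemma reflVec_single (i j : I) (x : C.X) :
    C.reflVec i x (Pi.single j 1) = Pi.single j 1 - C.A x i j • Pi.single i 1 := by
  rw [reflVec_eq, mulVec_single_one_apply]

lemma reflVec_single_self (i : I) (x : C.X) :
    C.reflVec i x (Pi.single i 1) = -Pi.single i 1 := by
  rw [reflVec_single, C.diag]
  module

lemma reflVec_r_reflVec (i : I) (x : C.X) (v : I → ℤ) :
    C.reflVec i (C.r i x) (C.reflVec i x v) = v := by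
  rw [reflVec_eq, mulVec_r_apply_self, reflVec_eq, mulVec_sub, mulVec_smul,
    Pi.sub_apply, Pi.smul_apply, mulVec_single_one_apply, C.diag]
  module

lemma reflVec_reflVec_r (i : I) (x : C.X) (v : I → ℤ) :
    C.reflVec i x (C.reflVec i (C.r i x) v) = v := by
  simpa only [C.r_invol] using C.reflVec_r_reflVec i (C.r i x) v

lemma reflVec_injective (i : I) (x : C.X) : Function.Injective (C.reflVec i x) :=
  Function.LeftInverse.injective (C.reflVec_r_reflVec i x)

lemma dvd_reflVec {d : ℤ} {v : I → ℤ} (hd : ∀ k, d ∣ v k) (i : I) (x : C.X) (k : I) :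
    d ∣ C.reflVec i x v k := by
  by_cases hk : k = i
  · subst hk
    rw [reflVec_apply_self]
    exact dvd_sub (hd k) (Finset.dvd_sum fun j _ => (hd j).mul_left _)
  · rw [C.reflVec_apply_of_ne hk]
    exact hd k

variable {C}

lemma IsRealRoot.of_r {x : C.X} {i : I} {v : I → ℤ} (h : C.IsRealRoot (C.r i x) v) :
    C.IsRealRoot x (C.reflVec i (C.r i x) v) := by
  simpa only [C.r_invol] using IsRealRoot.step _ i v h

lemma isRealRoot_single_sub (x : C.X) (i j : I) :
    C.IsRealRoot x (Pi.single j 1 - C.A x i j • Pi.single i 1) := by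
  simpa only [reflVec_single, C.A_compat] using (IsRealRoot.basis (C.r i x) j).of_r

lemma IsRealRoot.isUnit_of_dvd {x : C.X} {v : I → ℤ} (h : C.IsRealRoot x v) {d : ℤ}
    (hd : ∀ k, d ∣ v k) : IsUnit d := by
  induction h with
  | basis y j => exact isUnit_of_dvd_one (by simpa using hd j)
  | step y j w _ ih =>
    apply ih
    rw [← C.reflVec_r_reflVec j y w]
    exact C.dvd_reflVec hd j _

lemma IsRealRoot.eq_single_of_nonneg {x : C.X} {v : I → ℤ} (h : C.IsRealRoot x v) {i : I}
    (hv : ∀ k, 0 ≤ v k) (hsupp : ∀ k, k ≠ i → v k = 0) : v = Pi.single i 1 := by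
  have hvi : v i = 1 := by
    have hunit := h.isUnit_of_dvd (d := v i) fun k => by
      by_cases hk : k = i
      · rw [hk]
      · rw [hsupp k hk]; exact dvd_zero _
    exact (Int.isUnit_iff.mp hunit).resolve_right fun h1 => by linarith [hv i]
  funext k
  by_cases hk : k = i
  · subst hk; simp [hvi]
  · simp [hsupp k hk, hk]

lemma splits_compl {x : C.X} {s : Set I} (hs : ∀ p ∈ s, ∀ q ∈ sᶜ, C.A x p q = 0) :
    ∀ p ∈ sᶜ, ∀ q ∈ sᶜᶜ, C.A x p q = 0 := fun p hp q hq =>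
  C.zeroSymm x q p (hs q (compl_compl s ▸ hq) p hp)

namespace HasSignedRoots

variable (hsign : C.HasSignedRoots)
include hsign

lemma nonneg_of_pos {x : C.X} {v : I → ℤ} (h : C.IsRealRoot x v) {k : I} (hk : 0 < v k) :
    ∀ m, 0 ≤ v m :=
  (hsign x v h).resolve_right fun hneg => (hneg k).not_gt hk

lemma mulVec_apply_le {x : C.X} {v : I → ℤ} (h : C.IsRealRoot x v) {i j : I} (hji : j ≠ i)
    (hj : 0 < v j) : (C.A x *ᵥ v) i ≤ v i := by
  have hpos := hsign.nonneg_of_pos (IsRealRoot.step x i v h)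
    (k := j) (by rwa [C.reflVec_apply_of_ne hji])
  have := hpos i
  rw [reflVec_apply_self] at this
  linarith

lemma reflVec_nonneg {x : C.X} {v : I → ℤ} (h : C.IsRealRoot x v) {i : I}
    (hv : ∀ k, 0 ≤ v k) (hne : v ≠ Pi.single i 1) : ∀ k, 0 ≤ C.reflVec i x v k := by
  obtain ⟨j, hji, hj⟩ : ∃ j, j ≠ i ∧ 0 < v j := by
    by_contra! hsupp
    exact hne (h.eq_single_of_nonneg hv fun k hk => le_antisymm (hsupp k hk) (hv k))
  exact hsign.nonneg_of_pos (IsRealRoot.step x i v h) (k := j)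
    (by rwa [C.reflVec_apply_of_ne hji])

lemma A_r_neg {x : C.X} {i j : I} (hij : C.A x i j < 0) : C.A (C.r i x) j i < 0 := by
  have hji : j ≠ i := by
    rintro rfl
    linarith [C.diag x j]
  have hle := hsign.mulVec_apply_le (isRealRoot_single_sub (C.r i x) i j) (i := j) (j := i)
    hji.symm (by simp [hji, C.A_compat, hij])
  simp only [mulVec_sub, mulVec_smul, Pi.sub_apply, Pi.smul_apply, mulVec_single_one_apply,
    C.diag, C.A_compat, smul_eq_mul, Pi.single_eq_same, Pi.single_eq_of_ne hji] at hle
  nlinarith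

/-- If `a_{pq} ≠ 0` at `r_k x` with `k ∉ {p, q}`, reflecting the root `α_q - a_{pq} α_p` in
`α_k` gives a root at `x` on which `A x` is too large in coordinate `p`. -/
lemma splits_r_of_notMem {x : C.X} {s : Set I} (hs : ∀ p ∈ s, ∀ q ∈ sᶜ, C.A x p q = 0)
    {k : I} (hk : k ∉ s) : ∀ p ∈ s, ∀ q ∈ sᶜ, C.A (C.r k x) p q = 0 := by
  intro p hp q hq
  have hpq : p ≠ q := fun h => hq (h ▸ hp)
  have hpk : p ≠ k := fun h => hk (h ▸ hp)
  by_contra hne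
  set y := C.r k x
  have hneg : C.A y p q < 0 := lt_of_le_of_ne (C.offdiag y p q hpq) hne
  by_cases hqk : q = k
  · have hqp : C.A y q p < 0 :=
      lt_of_le_of_ne (C.offdiag y q p hpq.symm) fun h => hne (C.zeroSymm y q p h)
    have := hsign.A_r_neg hqp
    rw [hqk, C.r_invol, hs p hp k (hqk ▸ hq)] at this
    exact this.false
  · have hv := IsRealRoot.step y k _ (isRealRoot_single_sub y p q)
    rw [C.r_invol, reflVec_eq] at hv
    have hle := hsign.mulVec_apply_le hv (i := p) (j := q) hpq.symm
      (by simp [hpq.symm, hqk])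
    simp only [mulVec_sub, mulVec_smul, Pi.sub_apply, Pi.smul_apply, mulVec_single_one_apply,
      C.diag, smul_eq_mul, hs p hp q hq, hs p hp k hk, Pi.single_eq_same,
      Pi.single_eq_of_ne hpq, Pi.single_eq_of_ne hpk] at hle
    linarith

lemma splits_r {x : C.X} {s : Set I} (hs : ∀ p ∈ s, ∀ q ∈ sᶜ, C.A x p q = 0) (k : I) :
    ∀ p ∈ s, ∀ q ∈ sᶜ, C.A (C.r k x) p q = 0 := by
  by_cases hk : k ∈ s
  · have := hsign.splits_r_of_notMem (C.splits_compl hs) (s := sᶜ) (not_not_intro hk)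
    simpa only [compl_compl] using C.splits_compl this
  · exact hsign.splits_r_of_notMem hs hk

lemma isIndecMatrix_r {x : C.X} (h : IsIndecMatrix (C.A x)) (k : I) :
    IsIndecMatrix (C.A (C.r k x)) := by
  rintro ⟨s, hs, hsc, hsplit⟩
  have := hsign.splits_r hsplit k
  rw [C.r_invol] at this
  exact h ⟨s, hs, hsc, this⟩

end HasSignedRoots

section PosRoots

variable (C) (hfin : C.HasFiniteRoots)

noncomputable def posRoots (x : C.X) : Finset (I → ℤ) :=
  {v ∈ (hfin x).toFinset | ∀ k, 0 ≤ v k}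

noncomputable def posRootSum (x : C.X) : I → ℤ :=
  ∑ v ∈ C.posRoots hfin x, v

variable {C}

lemma mem_posRoots {x : C.X} {v : I → ℤ} :
    v ∈ C.posRoots hfin x ↔ C.IsRealRoot x v ∧ ∀ k, 0 ≤ v k := by
  simp [posRoots]

lemma single_mem_posRoots (x : C.X) (i : I) : Pi.single i 1 ∈ C.posRoots hfin x := by
  rw [mem_posRoots]
  refine ⟨IsRealRoot.basis x i, fun k => ?_⟩
  by_cases hk : k = i <;> simp [hk]

lemma one_le_posRootSum (x : C.X) (k : I) : 1 ≤ C.posRootSum hfin x k := by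
  rw [posRootSum, Finset.sum_apply]
  simpa using Finset.single_le_sum (f := fun v : I → ℤ => v k)
    (fun v hv => ((mem_posRoots hfin).mp hv).2 k) (single_mem_posRoots hfin x k)

lemma neg_single_notMem_posRoots (x : C.X) (i : I) :
    -Pi.single i 1 ∉ C.posRoots hfin x := fun h => by
  simpa using ((mem_posRoots hfin).mp h).2 i

lemma HasSignedRoots.posRoots_r (hsign : C.HasSignedRoots) (x : C.X) (i : I) :
    C.posRoots hfin (C.r i x) = insert (Pi.single i 1)
      (((C.posRoots hfin x).erase (Pi.single i 1)).image (C.reflVec i x)) := by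
  ext w
  simp only [Finset.mem_insert, Finset.mem_image, Finset.mem_erase, mem_posRoots]
  constructor
  · rintro ⟨hw, hwpos⟩
    refine or_iff_not_imp_left.mpr fun hne => ⟨C.reflVec i (C.r i x) w, ⟨?_, hw.of_r, ?_⟩,
      C.reflVec_reflVec_r i x w⟩
    · intro h
      apply neg_single_notMem_posRoots hfin (C.r i x) i
      rw [mem_posRoots, ← C.reflVec_single_self i x, ← h, C.reflVec_reflVec_r]
      exact ⟨hw, hwpos⟩
    · simpa only [C.r_invol] using hsign.reflVec_nonneg hw hwpos hne
  · rintro (rfl | ⟨v, ⟨hne, hv, hvpos⟩, rfl⟩)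
    · exact ((mem_posRoots hfin).mp (single_mem_posRoots hfin _ i))
    · exact ⟨IsRealRoot.step x i v hv, hsign.reflVec_nonneg hv hvpos hne⟩

/-- `r_i` permutes the positive roots other than `α_i` and swaps `α_i` with `-α_i`. -/
lemma HasSignedRoots.posRootSum_r (hsign : C.HasSignedRoots) (x : C.X) (i : I) :
    C.posRootSum hfin (C.r i x) = C.reflVec i x (C.posRootSum hfin x) + 2 • Pi.single i 1 := by
  have hnotMem : Pi.single i 1 ∉
      ((C.posRoots hfin x).erase (Pi.single i 1)).image (C.reflVec i x) := by
    intro h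
    obtain ⟨v, hv, hvi⟩ := Finset.mem_image.mp h
    apply neg_single_notMem_posRoots hfin x i
    rw [← C.reflVec_single_self i (C.r i x), ← hvi, C.reflVec_r_reflVec]
    exact Finset.mem_of_mem_erase hv
  have hsum := Finset.sum_erase_add _ (fun v => v) (single_mem_posRoots hfin x i)
  rw [posRootSum, hsign.posRoots_r, Finset.sum_insert hnotMem,
    Finset.sum_image fun _ _ _ _ h => C.reflVec_injective i x h, posRootSum, ← hsum]
  rw [← C.reflLin_apply i x (_ + _), map_add, map_sum]
  simp only [reflLin_apply, reflVec_single_self]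
  abel

lemma HasSignedRoots.sum_posRootSum_r (hsign : C.HasSignedRoots) (x : C.X) (i : I) :
    ∑ k, C.posRootSum hfin (C.r i x) k
      = ∑ k, C.posRootSum hfin x k + 2 - (C.A x *ᵥ C.posRootSum hfin x) i := by
  rw [hsign.posRootSum_r, reflVec_eq]
  simp [Finset.sum_add_distrib, Finset.sum_sub_distrib, Pi.single_apply]
  ring

end PosRoots

namespace IsConnected

variable (hconn : C.IsConnected)
include hconn

lemma induction {P : C.X → Prop} {x₀ : C.X} (h₀ : P x₀)
    (hr : ∀ i x, P x → P (C.r i x)) (x : C.X) : P x := by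
  have hP : {x | P x} = Set.univ := hconn {x | P x} ⟨x₀, h₀⟩ hr
  exact Set.eq_univ_iff_forall.mp hP x

lemma exists_injective_mapsTo_roots (x₀ x : C.X) :
    ∃ g : (I → ℤ) →ₗ[ℤ] (I → ℤ), Function.Injective g ∧
      Set.MapsTo g {v | C.IsRealRoot x v} {v | C.IsRealRoot x₀ v} := by
  refine hconn.induction (P := fun x => ∃ g : (I → ℤ) →ₗ[ℤ] (I → ℤ), Function.Injective g ∧
      Set.MapsTo g {v | C.IsRealRoot x v} {v | C.IsRealRoot x₀ v})
    ⟨LinearMap.id, Function.injective_id, Set.mapsTo_id _⟩ ?_ x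
  rintro i y ⟨g, hg, hroots⟩
  exact ⟨g ∘ₗ C.reflLin i (C.r i y), hg.comp (C.reflVec_injective i (C.r i y)),
    fun _ hv => hroots hv.of_r⟩

/-- A linear map is determined by its values on the basis vectors `α_k`, which are roots at
every point; so only finitely many maps `g` occur above, each with finite preimage of the
roots at `x₀`. -/
lemma finite_setOf_exists_isRealRoot {x₀ : C.X} (hfin : {v : I → ℤ | C.IsRealRoot x₀ v}.Finite) :
    {v : I → ℤ | ∃ x, C.IsRealRoot x v}.Finite := by
  set R₀ := {v : I → ℤ | C.IsRealRoot x₀ v}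
  set G := {g : (I → ℤ) →ₗ[ℤ] (I → ℤ) | Function.Injective g ∧ ∀ k, g (Pi.single k 1) ∈ R₀}
  have hG : G.Finite := by
    refine Set.Finite.of_finite_image (f := fun g k => g (Pi.single k 1)) ?_ ?_
    · refine (Set.Finite.pi fun _ => hfin).subset ?_
      rintro _ ⟨g, hg, rfl⟩ k -
      exact hg.2 k
    · intro g _ g' _ h
      refine (Pi.basisFun ℤ I).ext fun k => ?_
      simpa using congrFun h k
  refine (hG.biUnion fun g hg => hfin.preimage hg.1.injOn).subset ?_
  rintro v ⟨x, hv⟩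
  obtain ⟨g, hg, hroots⟩ := hconn.exists_injective_mapsTo_roots x₀ x
  exact Set.mem_biUnion ⟨hg, fun k => hroots (IsRealRoot.basis x k)⟩ (hroots hv)

lemma exists_forall_sum_posRootSum_le (hfin : C.HasFiniteRoots) :
    ∃ x, ∀ y, ∑ k, C.posRootSum hfin y k ≤ ∑ k, C.posRootSum hfin x k := by
  obtain ⟨x₀⟩ := C.nonemptyX
  set F := (hconn.finite_setOf_exists_isRealRoot (hfin x₀)).toFinset
  let N : Finset (I → ℤ) → ℤ := fun t => ∑ k, (∑ v ∈ t, v) k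
  have hrange : (Set.range fun x => N (C.posRoots hfin x)).Finite := by
    refine (F.powerset.finite_toSet.image N).subset ?_
    rintro _ ⟨x, rfl⟩
    refine ⟨C.posRoots hfin x, Finset.mem_powerset.mpr fun v hv => ?_, rfl⟩
    simpa [F] using ⟨x, ((mem_posRoots hfin).mp hv).1⟩
  obtain ⟨_, ⟨x, rfl⟩, hmax⟩ := Set.exists_max_image _ id hrange ⟨_, x₀, rfl⟩
  exact ⟨x, fun y => hmax _ ⟨y, rfl⟩⟩

end IsConnected

end SemiCartanGraph

theorem stmt_12_general {I : Type*} [Fintype I] [DecidableEq I] (C : SemiCartanGraph I)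
    (hfin : ∀ x : C.X, {v : I → ℤ | C.IsRealRoot x v}.Finite)
    (hpm : ∀ (x : C.X) (v : I → ℤ), C.IsRealRoot x v →
      (∀ i, 0 ≤ v i) ∨ (∀ i, v i ≤ 0))
    (hconn : ∀ Y : Set C.X, Y.Nonempty → (∀ (i : I), ∀ x ∈ Y, C.r i x ∈ Y) →
      Y = Set.univ)
    (hind : ∃ x : C.X, SemiCartanGraph.IsIndecMatrix (C.A x)) :
    ∃ x : C.X, SemiCartanGraph.IsFiniteType (C.A x) := by
  obtain ⟨x₁, hx₁⟩ := hind
  have hindec : ∀ x, SemiCartanGraph.IsIndecMatrix (C.A x) :=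
    SemiCartanGraph.IsConnected.induction hconn hx₁ fun i _ hx =>
      SemiCartanGraph.HasSignedRoots.isIndecMatrix_r hpm hx i
  obtain ⟨x, hmax⟩ := SemiCartanGraph.IsConnected.exists_forall_sum_posRootSum_le hconn hfin
  refine ⟨x, SemiCartanGraph.isFiniteType_of_mulVec_pos (C.offdiag x) (hindec x)
    (SemiCartanGraph.one_le_posRootSum hfin x) fun i => ?_⟩
  have hi := hmax (C.r i x)
  rw [SemiCartanGraph.HasSignedRoots.sum_posRootSum_r hfin hpm] at hi
  linarith

/-- Theorem `thm:finitetype`: every connected indecomposable finite Cartan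
graph has a point whose Cartan matrix is of finite type.  The hypotheses are:
all sets of real roots are finite; every real root is positive or negative and
the exchange condition holds (so `C` is a Cartan graph); `C` is connected; and
some point has an indecomposable Cartan matrix. -/
theorem stmt_12 {I : Type*} [Fintype I] [DecidableEq I] (C : SemiCartanGraph I)
    (hfin : ∀ x : C.X, {v : I → ℤ | C.IsRealRoot x v}.Finite)
    (hpm : ∀ (x : C.X) (v : I → ℤ), C.IsRealRoot x v →
      (∀ i, 0 ≤ v i) ∨ (∀ i, v i ≤ 0))
    (hexch : ∀ (x : C.X) (i j : I), i ≠ j →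
      (fun y => C.r i (C.r j y))^[
        ({v : I → ℤ | C.IsRealRoot x v ∧ (∀ k, 0 ≤ v k) ∧
          ∀ k, k ≠ i → k ≠ j → v k = 0}).ncard] x = x)
    (hconn : ∀ Y : Set C.X, Y.Nonempty → (∀ (i : I), ∀ x ∈ Y, C.r i x ∈ Y) →
      Y = Set.univ)
    (hind : ∃ x : C.X, SemiCartanGraph.IsIndecMatrix (C.A x)) :
    ∃ x : C.X, SemiCartanGraph.IsFiniteType (C.A x) :=
  stmt_12_general C hfin hpm hconn hind
end

section
/- For a braided vector space of diagonal type with basis v₁, v₂, v₃ and braiding c(v_i ⊗ v_j) = q_{ij} v_j ⊗ v_i with all q_{ij} nonzero, the element (ad v₁)(ad v₂)(v₃) in the Nichols algebra is zero if and only if q₂₃q₃₂ = 1, or q₁₃q₃₁ = q₁₂q₂₁ = 1. -/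
/-- Lemma `lem:rank3ab`: for a braided vector space of diagonal type with
braiding matrix `(q_{ij})`, all `q_{ij} ≠ 0`, the element
`(ad v₁)(ad v₂)(v₃)` of the Nichols algebra vanishes iff `q₂₃q₃₂ = 1` or
`q₁₃q₃₁ = q₁₂q₂₁ = 1`.  Using the explicit identification
`(ad v₁)(ad v₂)(v₃) = φ₂(id ⊗ φ₁)(v₁⊗v₂⊗v₃)
  = (1 − q₂₃q₃₂)·[(1 − q₁₂q₂₁q₁₃q₃₁) v₁⊗v₂⊗v₃ + q₁₂(1 − q₁₃q₃₁) v₂⊗v₁⊗v₃]`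
and the linear independence of `v₁⊗v₂⊗v₃` and `v₂⊗v₁⊗v₃`, vanishing of
`(ad v₁)(ad v₂)(v₃)` is exactly the vanishing of the two coefficients. -/
theorem stmt_14 {K : Type*} [Field K]
    (q11 q12 q13 q21 q22 q23 q31 q32 q33 : K)
    (h11 : q11 ≠ 0) (h12 : q12 ≠ 0) (h13 : q13 ≠ 0)
    (h21 : q21 ≠ 0) (h22 : q22 ≠ 0) (h23 : q23 ≠ 0)
    (h31 : q31 ≠ 0) (h32 : q32 ≠ 0) (h33 : q33 ≠ 0) :
    ((1 - q23 * q32) * (1 - q12 * q21 * q13 * q31) = 0 ∧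
        (1 - q23 * q32) * (q12 * (1 - q13 * q31)) = 0) ↔
      (q23 * q32 = 1 ∨ (q13 * q31 = 1 ∧ q12 * q21 = 1)) := by
  constructor
  · rintro ⟨h1, h2⟩
    rcases mul_eq_zero.mp h1 with h | h
    · left; linear_combination -h
    · rcases mul_eq_zero.mp h2 with h' | h'
      · left; linear_combination -h'
      · rcases mul_eq_zero.mp h' with h'' | h''
        · exact absurd h'' h12
        · right
          have hq : q13 * q31 = 1 := by linear_combination -h''
          refine ⟨hq, ?_⟩
          have h3 : q12 * q21 * (q13 * q31) = 1 := by linear_combination -h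
          rw [hq, mul_one] at h3
          exact h3
  · rintro (h | ⟨h1, h2⟩)
    · constructor <;> · rw [show (1 : K) - q23 * q32 = 0 by linear_combination -h, zero_mul]
    · constructor
      · have h3 : q12 * q21 * q13 * q31 = 1 := by linear_combination q13 * q31 * h2 + h1
        rw [h3]; ring
      · rw [h1]; ring
end

section
/- Let θ ≥ 2, M a tuple of Yetter-Drinfeld modules over a group G admitting integral Cartan entries, let J, K be disjoint nonempty subsets of {1,…,θ}, and i ∈ J. If a^M_{jk} = 0 for all j ∈ J, k ∈ K (i.e., c² = id on M_j ⊗ M_k), then after the i-th reflection R_i(M), still a^{R_i(M)}_{jk} = 0 for all j ∈ J, k ∈ K. -/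
/-!
If `c² = id` on `V ⊗ U` with `U` a graded module, then for nonzero homogeneous `v ∈ V_a` and
`w ∈ U_h` the equation `v ⊗ w = (a h a⁻¹) • v ⊗ a • w` forces `a` and `h` to commute and
`h`, `a` to act on `v`, `w` by mutually inverse scalars. These scalars multiply on tensor
products of homogeneous elements and are inverted on the dual, so `c² = id` against `M_k`
passes from `M_i` and `M_j` to `M_i^{⊗ m} ⊗ M_j` and to `M_i^*`, the ambient modules of the
reflected modules `R_i(M)_j`.
-/

open scoped TensorProduct

universe u

/-- A bundled `K`-vector space. -/
structure BMod (K : Type u) [Field K] : Type (u + 1) where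
  carrier : Type u
  [isAddCommGroup : AddCommGroup carrier]
  [isModule : Module K carrier]

attribute [instance] BMod.isAddCommGroup BMod.isModule

section YD

variable {K : Type u} [Field K] {G : Type u} [Group G]

/-- The condition `c_{W,V} c_{V,W} = id` on `V ⊗ W` for Yetter–Drinfeld
modules, stated on homogeneous elements: this is exactly the vanishing Cartan
entry condition `a_{VW} = 0`. -/
def CSqId {V W : Type u} [AddCommGroup V] [Module K V]
    [AddCommGroup W] [Module K W]
    (ρV : Representation K G V) (gV : G → Submodule K V)
    (ρW : Representation K G W) (gW : G → Submodule K W) : Prop :=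
  ∀ (g h : G) (v : V) (w : W), v ∈ gV g → w ∈ gW h →
    (v ⊗ₜ[K] w : V ⊗[K] W) = (ρV (g * h * g⁻¹) v) ⊗ₜ[K] (ρW g w)

/-- The `G`-grading of the tensor product of two `G`-graded vector spaces. -/
def tensorGrade {V W : Type u} [AddCommGroup V] [Module K V]
    [AddCommGroup W] [Module K W]
    (gV : G → Submodule K V) (gW : G → Submodule K W) (g : G) :
    Submodule K (V ⊗[K] W) :=
  ⨆ (p : G × G) (_ : p.1 * p.2 = g),
    Submodule.span K
      (Set.image2 (fun v w => v ⊗ₜ[K] w) (gV p.1 : Set V) (gW p.2 : Set W))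

/-- Iterated tensor powers `V^{⊗ m}` (with `V^{⊗ 0} = K`). -/
noncomputable def powBMod (W : BMod K) : ℕ → BMod K
  | 0 => ⟨K⟩
  | (m + 1) => ⟨TensorProduct K (powBMod W m).carrier W.carrier⟩

/-- The `G`-representation on `V^{⊗ m}`. -/
noncomputable def powRep (W : BMod K) (ρW : Representation K G W.carrier) :
    (m : ℕ) → Representation K G (powBMod W m).carrier
  | 0 => Representation.trivial K G _
  | (m + 1) => (powRep W ρW m).tprod ρW

/-- The `G`-grading of `V^{⊗ m}` (with `K` in degree `1`). -/
noncomputable def powGrade (W : BMod K) (gW : G → Submodule K W.carrier) :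
    (m : ℕ) → G → Submodule K (powBMod W m).carrier
  | 0 => fun g => ⨆ (_ : g = (1 : G)), (⊤ : Submodule K K)
  | (m + 1) => tensorGrade (powGrade W gW m) gW

/-- The `G`-grading of the dual module: `(V^*)_g` consists of the functionals
vanishing on `V_h` for all `h ≠ g⁻¹`. -/
def dualGrade {V : Type u} [AddCommGroup V] [Module K V]
    (gV : G → Submodule K V) (g : G) : Submodule K (Module.Dual K V) :=
  ⨅ (h : G) (_ : h ≠ g⁻¹), (gV h).dualAnnihilator

end YD

section TensorProduct

variable {K V W : Type*} [Field K] [AddCommGroup V] [Module K V] [AddCommGroup W] [Module K W]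

theorem TensorProduct.exists_smul_of_tmul_eq_tmul {x x' : V} {y y' : W} (hx : x ≠ 0)
    (hy : y ≠ 0) (h : x ⊗ₜ[K] y = x' ⊗ₜ[K] y') :
    ∃ c : K, c ≠ 0 ∧ x' = c • x ∧ y' = c⁻¹ • y := by
  obtain ⟨φ, hφ⟩ := Module.Projective.exists_dual_eq_one K hx
  obtain ⟨ψ, hψ⟩ := Module.Projective.exists_dual_eq_one K hy
  have hx' : x = ψ y' • x' := by
    simpa [hψ] using congrArg ((TensorProduct.rid K V).toLinearMap ∘ₗ LinearMap.lTensor V ψ) h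
  have hy' : y = φ x' • y' := by
    simpa [hφ] using congrArg ((TensorProduct.lid K W).toLinearMap ∘ₗ LinearMap.rTensor W φ) h
  have hψφ : ψ y' * φ x' = 1 := by simpa [hφ, mul_comm] using (congrArg φ hx').symm
  refine ⟨φ x', right_ne_zero_of_mul_eq_one hψφ, ?_, ?_⟩
  · rw [hx', smul_smul, mul_comm, hψφ, one_smul]
  · rw [← eq_inv_of_mul_eq_one_left hψφ, hy', smul_smul, hψφ, one_smul]

end TensorProduct

section Grading

variable {K G V : Type*} [Field K] [DecidableEq G] [AddCommGroup V] [Module K V]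
  {gr : G → Submodule K V}

theorem DirectSum.IsInternal.eq_of_mem_of_mem (hint : DirectSum.IsInternal gr) {a b : G}
    {x : V} (hx : x ≠ 0) (ha : x ∈ gr a) (hb : x ∈ gr b) : a = b := by
  by_contra hab
  exact hx (Submodule.disjoint_def.mp (hint.submodule_iSupIndep.pairwiseDisjoint hab) x ha hb)

theorem DirectSum.IsInternal.linearMap_ext {W : Type*} [AddCommGroup W] [Module K W]
    (hint : DirectSum.IsInternal gr) {f f' : V →ₗ[K] W}
    (h : ∀ a, ∀ x ∈ gr a, f x = f' x) : f = f' := by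
  have htop : ⊤ ≤ LinearMap.eqLocus f f' :=
    hint.submodule_iSup_eq_top ▸ iSup_le fun a x hx => h a x hx
  exact LinearMap.ext fun x => htop Submodule.mem_top

end Grading

theorem Representation.apply_inv_eq_inv_smul {K G V : Type*} [Field K] [Group G]
    [AddCommGroup V] [Module K V] {ρ : Representation K G V} {g : G} {x : V}
    {c : K} (hc : c ≠ 0) (h : ρ g x = c • x) : ρ g⁻¹ x = c⁻¹ • x := by
  have hx : ρ g⁻¹ (ρ g x) = x := by
    rw [← Module.End.mul_apply, ← map_mul, inv_mul_cancel, map_one, Module.End.one_apply]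
  rw [h, map_smul] at hx
  exact ((inv_smul_eq_iff₀ hc).mpr hx.symm).symm

section GradedRepresentation

variable {K G V : Type u} [Field K] [Group G] [AddCommGroup V] [Module K V]

/-- The Yetter–Drinfeld compatibility of an action with a grading. -/
def GradingCompatible (ρ : Representation K G V) (gr : G → Submodule K V) : Prop :=
  ∀ (g h : G), ∀ v ∈ gr h, ρ g v ∈ gr (g * h * g⁻¹)

theorem mem_dualGrade {gr : G → Submodule K V} {g : G} {f : Module.Dual K V} :
    f ∈ dualGrade gr g ↔ ∀ h, h ≠ g⁻¹ → ∀ x ∈ gr h, f x = 0 := by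
  simp [dualGrade, Submodule.mem_iInf, Submodule.mem_dualAnnihilator]

theorem eq_of_mem_dualGrade [DecidableEq G] {gr : G → Submodule K V}
    (hint : DirectSum.IsInternal gr) {g : G} {f f' : Module.Dual K V}
    (hf : f ∈ dualGrade gr g) (hf' : f' ∈ dualGrade gr g) (h : ∀ x ∈ gr g⁻¹, f x = f' x) :
    f = f' := by
  refine hint.linearMap_ext fun a x hx => ?_
  by_cases ha : a = g⁻¹
  · exact h x (ha ▸ hx)
  · rw [mem_dualGrade.mp hf a ha x hx, mem_dualGrade.mp hf' a ha x hx]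

theorem GradingCompatible.dual {ρ : Representation K G V} {gr : G → Submodule K V}
    (hρ : GradingCompatible ρ gr) : GradingCompatible ρ.dual (dualGrade gr) := by
  intro k g f hf
  refine mem_dualGrade.mpr fun h hh x hx => mem_dualGrade.mp hf _ ?_ _ (hρ k⁻¹ h x hx)
  intro he
  apply hh
  rw [show g = (k⁻¹ * h * k⁻¹⁻¹)⁻¹ by rw [he, inv_inv]]
  group

end GradedRepresentation

section CSqId

variable {K : Type u} [Field K] {G : Type u} [Group G] [DecidableEq G]
  {V U : Type u} [AddCommGroup V] [Module K V] [AddCommGroup U] [Module K U]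
  {ρV : Representation K G V} {gV : G → Submodule K V}
  {ρU : Representation K G U} {gU : G → Submodule K U}

theorem CSqId.exists_smul (hcs : CSqId ρV gV ρU gU) (hU : DirectSum.IsInternal gU)
    (hρU : GradingCompatible ρU gU) {a h : G} {v : V} {w : U} (hv : v ∈ gV a)
    (hw : w ∈ gU h) (hv0 : v ≠ 0) (hw0 : w ≠ 0) :
    Commute a h ∧ ∃ c : K, c ≠ 0 ∧ ρV h v = c • v ∧ ρU a w = c⁻¹ • w := by
  obtain ⟨c, hc, hvc, hwc⟩ :=
    TensorProduct.exists_smul_of_tmul_eq_tmul hv0 hw0 (hcs a h v w hv hw)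
  have hconj : a * h * a⁻¹ = h :=
    hU.eq_of_mem_of_mem (hwc ▸ smul_ne_zero (inv_ne_zero hc) hw0) (hρU a h w hw)
      (hwc ▸ Submodule.smul_mem _ _ hw)
  exact ⟨mul_inv_eq_iff_eq_mul.mp hconj, c, hc, hconj ▸ hvc, hwc⟩

theorem CSqId.tprod {W : Type u} [AddCommGroup W] [Module K W] {ρW : Representation K G W}
    {gW : G → Submodule K W} (hV : CSqId ρV gV ρU gU) (hW : CSqId ρW gW ρU gU)
    (hU : DirectSum.IsInternal gU) (hρU : GradingCompatible ρU gU) :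
    CSqId (ρV.tprod ρW) (tensorGrade gV gW) ρU gU := by
  intro g h t w ht hw
  by_cases hw0 : w = 0
  · simp [hw0]
  suffices tensorGrade gV gW g ≤ LinearMap.eqLocus ((TensorProduct.mk K _ U).flip w)
      (((TensorProduct.mk K _ U).flip (ρU g w)) ∘ₗ (ρV.tprod ρW) (g * h * g⁻¹)) from this ht
  refine iSup₂_le fun ⟨a, b⟩ hab => Submodule.span_le.mpr ?_
  rintro _ ⟨v₁, hv₁, v₂, hv₂, rfl⟩
  subst hab
  by_cases hv₁0 : v₁ = 0
  · simp [hv₁0]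
  by_cases hv₂0 : v₂ = 0
  · simp [hv₂0]
  obtain ⟨ha, c₁, hc₁, hv₁c, hwa⟩ := hV.exists_smul hU hρU hv₁ hw hv₁0 hw0
  obtain ⟨hb, c₂, hc₂, hv₂c, hwb⟩ := hW.exists_smul hU hρU hv₂ hw hv₂0 hw0
  have hwab : ρU (a * b) w = (c₁ * c₂)⁻¹ • w := by
    rw [map_mul, Module.End.mul_apply, hwb, map_smul, hwa, smul_smul, mul_inv_rev]
  simp only [SetLike.mem_coe, LinearMap.mem_eqLocus, LinearMap.flip_apply,
    LinearMap.comp_apply, TensorProduct.mk_apply, (ha.mul_left hb).mul_inv_cancel,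
    Representation.tprod_apply, TensorProduct.map_tmul, hv₁c, hv₂c, hwab,
    TensorProduct.smul_tmul_smul, mul_inv_cancel₀ (mul_ne_zero hc₁ hc₂), one_smul]

theorem CSqId.powRep (Wb : BMod K) {ρW : Representation K G Wb.carrier}
    {gW : G → Submodule K Wb.carrier} (hW : CSqId ρW gW ρU gU) (hU : DirectSum.IsInternal gU)
    (hρU : GradingCompatible ρU gU) :
    ∀ m, CSqId (powRep Wb ρW m) (powGrade Wb gW m) ρU gU
  | 0 => by
    intro g h v w hv hw
    by_cases hg : g = 1
    · simp [hg, _root_.powRep, Representation.trivial]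
    · have hbot : powGrade Wb gW 0 g = ⊥ := iSup_neg hg
      rw [hbot, Submodule.mem_bot] at hv
      simp [hv]
  | m + 1 => (CSqId.powRep Wb hW hU hρU m).tprod hW hU hρU

theorem CSqId.dual (hcs : CSqId ρV gV ρU gU) (hV : DirectSum.IsInternal gV)
    (hU : DirectSum.IsInternal gU) (hρV : GradingCompatible ρV gV)
    (hρU : GradingCompatible ρU gU) : CSqId ρV.dual (dualGrade gV) ρU gU := by
  intro g h f w hf hw
  by_cases hw0 : w = 0
  · simp [hw0]
  by_cases hf0 : f = 0
  · simp [hf0]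
  obtain ⟨x₀, hx₀, hx₀0⟩ : ∃ x ∈ gV g⁻¹, x ≠ 0 := by
    by_contra! hgV
    exact hf0 (eq_of_mem_dualGrade hV hf (zero_mem _) fun x hx => by simp [hgV x hx])
  obtain ⟨hgh, c, hc, -, hwc⟩ := hcs.exists_smul hU hρU hx₀ hw hx₀0 hw0
  replace hgh : Commute g h := Commute.inv_left_iff.mp hgh
  -- `c` is determined by `w`, so `h` acts by the same scalar on all of `V_{g⁻¹}`.
  have hV_eigen : ∀ x ∈ gV g⁻¹, ρV h⁻¹ x = c⁻¹ • x := by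
    intro x hx
    by_cases hx0 : x = 0
    · simp [hx0]
    obtain ⟨-, c', -, hxc', hwc'⟩ := hcs.exists_smul hU hρU hx hw hx0 hw0
    have hcc' : c' = c := inv_injective (smul_left_injective K hw0 (hwc'.symm.trans hwc))
    exact Representation.apply_inv_eq_inv_smul hc (hcc' ▸ hxc')
  have hf' : ρV.dual (g * h * g⁻¹) f = c⁻¹ • f := by
    rw [hgh.mul_inv_cancel]
    refine eq_of_mem_dualGrade hV (g := g) ?_ (Submodule.smul_mem _ _ hf) fun x hx => ?_
    · simpa [hgh.symm.mul_inv_cancel] using hρV.dual h g f hf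
    · simp [Representation.dual_apply, Module.Dual.transpose_apply, hV_eigen x hx]
  have hwg : ρU g w = c • w := by
    simpa using Representation.apply_inv_eq_inv_smul (inv_ne_zero hc) hwc
  rw [hf', hwg, TensorProduct.smul_tmul_smul, inv_mul_cancel₀ hc, one_smul]

end CSqId

theorem stmt_16_general {K : Type u} [Field K] {G : Type u} [Group G] [DecidableEq G]
    {θ : ℕ}
    (M : Fin θ → BMod K)
    (ρ : ∀ j, Representation K G (M j).carrier)
    (gr : ∀ j, G → Submodule K (M j).carrier)
    (hint : ∀ j, DirectSum.IsInternal (gr j))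
    (hcompat : ∀ j (g h : G), ∀ v ∈ gr j h, ρ j g v ∈ gr j (g * h * g⁻¹))
    (J Kset : Set (Fin θ)) (i : Fin θ) (hi : i ∈ J)
    (hzero : ∀ j ∈ J, ∀ k ∈ Kset, CSqId (ρ j) (gr j) (ρ k) (gr k)) :
    ∀ j ∈ J, ∀ k ∈ Kset,
      (∀ m : ℕ,
        CSqId ((powRep (M i) (ρ i) m).tprod (ρ j))
          (tensorGrade (powGrade (M i) (gr i) m) (gr j)) (ρ k) (gr k)) ∧
      CSqId ((ρ i).dual) (dualGrade (gr i)) (ρ k) (gr k) := by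
  intro j hj k hk
  have hik := hzero i hi k hk
  exact ⟨fun m => (hik.powRep (M i) (hint k) (hcompat k) m).tprod (hzero j hj k hk)
      (hint k) (hcompat k),
    hik.dual (hint i) (hint k) (hcompat i) (hcompat k)⟩

/-- Lemma `lem:disconnected`: let `M = (M₁,…,M_θ)` be a tuple of
Yetter–Drinfeld modules over `G` (admitting integral Cartan entries), `J, K`
disjoint nonempty subsets of the index set, `i ∈ J`, and assume `a^M_{jk} = 0`
(i.e. `c² = id` on `M_j ⊗ M_k`, formalized as `CSqId`) for all `j ∈ J`,
`k ∈ K`.  Then `a^{R_i(M)}_{jk} = 0` for all `j ∈ J`, `k ∈ K`: the reflected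
module `R_i(M)_j` is `(ad M_i)^{-a^M_{ij}}(M_j)`, a Yetter–Drinfeld submodule
of `M_i^{⊗ m} ⊗ M_j`, resp. `M_i^*` for `j = i`, and the condition `c² = id`
against `M_k` holds for the ambient modules `M_i^{⊗ m} ⊗ M_j` (for every
`m : ℕ`) and `M_i^*`, hence on the submodules `R_i(M)_j`. -/
theorem stmt_16 {K : Type u} [Field K] {G : Type u} [Group G] [DecidableEq G]
    {θ : ℕ} (hθ : 2 ≤ θ)
    (M : Fin θ → BMod K)
    (ρ : ∀ j, Representation K G (M j).carrier)
    (gr : ∀ j, G → Submodule K (M j).carrier)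
    (hint : ∀ j, DirectSum.IsInternal (gr j))
    (hcompat : ∀ j (g h : G), ∀ v ∈ gr j h, ρ j g v ∈ gr j (g * h * g⁻¹))
    (J Kset : Set (Fin θ)) (hJ : J.Nonempty) (hKset : Kset.Nonempty)
    (hdisj : Disjoint J Kset) (i : Fin θ) (hi : i ∈ J)
    (hzero : ∀ j ∈ J, ∀ k ∈ Kset, CSqId (ρ j) (gr j) (ρ k) (gr k)) :
    ∀ j ∈ J, ∀ k ∈ Kset,
      (∀ m : ℕ,
        CSqId ((powRep (M i) (ρ i) m).tprod (ρ j))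
          (tensorGrade (powGrade (M i) (gr i) m) (gr j)) (ρ k) (gr k)) ∧
      CSqId ((ρ i).dual) (dualGrade (gr i)) (ρ k) (gr k) :=
  stmt_16_general M ρ gr hint hcompat J Kset i hi hzero
end

section
/- Let G be a group and V, W nonzero Yetter-Drinfeld modules over G such that (id − c_{W,V}c_{V,W})(V ⊗ W) = 0. Then every element of the support of V commutes with every element of the support of W, and for each s ∈ supp V, t ∈ supp W there is a nonzero scalar λ such that s acts on W_t by λ and t acts on V_s by λ⁻¹. -/
open scoped TensorProduct

section Aux

variable {K V W : Type*} [Field K] [AddCommGroup V] [Module K V]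
  [AddCommGroup W] [Module K W]

lemma aux_exists_dual_one {v : V} (hv : v ≠ 0) : ∃ f : Module.Dual K V, f v = 1 := by
  have h := (not_iff_not.mpr (Module.forall_dual_apply_eq_zero_iff K v)).mpr hv
  push_neg at h
  obtain ⟨f, hf⟩ := h
  exact ⟨(f v)⁻¹ • f, by simp [inv_mul_cancel₀ hf]⟩

lemma aux_tmul_ne_zero {v : V} {w : W} (hv : v ≠ 0) (hw : w ≠ 0) :
    (v ⊗ₜ[K] w : V ⊗[K] W) ≠ 0 := by
  obtain ⟨f, hf⟩ := aux_exists_dual_one (K := K) hv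
  intro h
  have := congrArg ((TensorProduct.lid K W).toLinearMap ∘ₗ LinearMap.rTensor W f) h
  simp [hf] at this
  exact hw this

lemma aux_tmul_left_cancel {w : W} (hw : w ≠ 0) {x : V}
    (h : (x ⊗ₜ[K] w : V ⊗[K] W) = 0) : x = 0 := by
  obtain ⟨g, hg⟩ := aux_exists_dual_one (K := K) hw
  have := congrArg ((TensorProduct.rid K V).toLinearMap ∘ₗ LinearMap.lTensor V g) h
  simpa [hg] using this

lemma aux_tmul_eq_tmul {v v' : V} {w w' : W} (hv : v ≠ 0) (hw : w ≠ 0)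
    (h : (v ⊗ₜ[K] w : V ⊗[K] W) = v' ⊗ₜ[K] w') :
    ∃ lam : K, lam ≠ 0 ∧ w' = lam • w ∧ v' = lam⁻¹ • v := by
  obtain ⟨f, hf⟩ := aux_exists_dual_one (K := K) hv
  have h1 := congrArg ((TensorProduct.lid K W).toLinearMap ∘ₗ LinearMap.rTensor W f) h
  simp [hf] at h1
  -- h1 : w = f v' • w'
  set c : K := f v' with hc
  have hcne : c ≠ 0 := by
    intro h0
    rw [h0, zero_smul] at h1
    exact hw h1
  have hw' : w' = c⁻¹ • w := by
    rw [h1, smul_smul, inv_mul_cancel₀ hcne, one_smul]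
  have h2 : ((v - c⁻¹ • v') ⊗ₜ[K] w : V ⊗[K] W) = 0 := by
    rw [TensorProduct.sub_tmul, TensorProduct.smul_tmul, ← hw', ← h, sub_self]
  have h3 : v = c⁻¹ • v' := by
    have := aux_tmul_left_cancel hw h2
    rwa [sub_eq_zero] at this
  refine ⟨c⁻¹, inv_ne_zero hcne, hw', ?_⟩
  rw [inv_inv, h3, smul_smul, mul_inv_cancel₀ hcne, one_smul]

end Aux

/-- Lemma `lem:a=0`: let `V, W` be nonzero Yetter–Drinfeld modules over a
group `G` (formalized as `G`-graded `G`-representations, the grading being an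
internal direct sum compatible with the action) such that
`(id − c_{W,V} c_{V,W})(V ⊗ W) = 0`; on homogeneous elements this braiding
condition reads `v ⊗ w = (ghg⁻¹)·v ⊗ g·w` for `v ∈ V_g`, `w ∈ W_h`.  Then the
supports of `V` and `W` commute elementwise, and for all `s ∈ supp V`,
`t ∈ supp W` there is `λ ≠ 0` with `s` acting on `W_t` by `λ` and `t` acting
on `V_s` by `λ⁻¹`. -/
theorem stmt_17 {K G V W : Type*} [Field K] [Group G] [DecidableEq G]
    [AddCommGroup V] [Module K V] [AddCommGroup W] [Module K W]
    (ρV : Representation K G V) (ρW : Representation K G W)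
    (gV : G → Submodule K V) (gW : G → Submodule K W)
    (hintV : DirectSum.IsInternal gV) (hintW : DirectSum.IsInternal gW)
    (hcompatV : ∀ g h : G, ∀ v ∈ gV h, ρV g v ∈ gV (g * h * g⁻¹))
    (hcompatW : ∀ g h : G, ∀ w ∈ gW h, ρW g w ∈ gW (g * h * g⁻¹))
    (hV : ∃ v : V, v ≠ 0) (hW : ∃ w : W, w ≠ 0)
    (hbraid : ∀ (g h : G) (v : V) (w : W), v ∈ gV g → w ∈ gW h →
      (v ⊗ₜ[K] w : V ⊗[K] W) = (ρV (g * h * g⁻¹) v) ⊗ₜ[K] (ρW g w)) :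
    ∀ s t : G, gV s ≠ ⊥ → gW t ≠ ⊥ →
      s * t = t * s ∧ ∃ lam : K, lam ≠ 0 ∧
        (∀ w ∈ gW t, ρW s w = lam • w) ∧
        (∀ v ∈ gV s, ρV t v = lam⁻¹ • v) := by
  intro s t hVs hWt
  obtain ⟨v₀, hv₀mem, hv₀⟩ := (Submodule.ne_bot_iff _).mp hVs
  obtain ⟨w₀, hw₀mem, hw₀⟩ := (Submodule.ne_bot_iff _).mp hWt
  letI : DirectSum.Decomposition gW := hintW.chooseDecomposition
  -- commutation
  have hcomm : s * t * s⁻¹ = t := by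
    by_contra hne
    -- projection onto gW t
    let π : W →ₗ[K] W := (gW t).subtype ∘ₗ
      (DFinsupp.lapply t : (DirectSum G fun i => gW i) →ₗ[K] gW t) ∘ₗ
      (DirectSum.decomposeLinearEquiv gW).toLinearMap
    have hπ_same : ∀ w ∈ gW t, π w = w := fun w hw => by
      simp only [π, LinearMap.comp_apply, LinearEquiv.coe_coe,
        DirectSum.decomposeLinearEquiv_apply, DFinsupp.lapply_apply, Submodule.coe_subtype]
      exact DirectSum.decompose_of_mem_same gW hw
    have hπ_ne : ∀ (j : G), j ≠ t → ∀ w ∈ gW j, π w = 0 := fun j hj w hw => by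
      simp only [π, LinearMap.comp_apply, LinearEquiv.coe_coe,
        DirectSum.decomposeLinearEquiv_apply, DFinsupp.lapply_apply, Submodule.coe_subtype]
      exact DirectSum.decompose_of_mem_ne gW hw hj
    have E := hbraid s t v₀ w₀ hv₀mem hw₀mem
    have E2 := congrArg (LinearMap.lTensor V π) E
    simp only [LinearMap.lTensor_tmul] at E2
    rw [hπ_same w₀ hw₀mem, hπ_ne _ hne _ (hcompatW s t w₀ hw₀mem),
      TensorProduct.tmul_zero] at E2
    exact aux_tmul_ne_zero hv₀ hw₀ E2
  have hst : s * t = t * s := by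
    have := hcomm
    rwa [mul_inv_eq_iff_eq_mul] at this
  -- scalar part
  have key : ∀ v ∈ gV s, v ≠ 0 → ∀ w ∈ gW t, w ≠ 0 →
      ∃ lam : K, lam ≠ 0 ∧ ρW s w = lam • w ∧ ρV t v = lam⁻¹ • v := by
    intro v hvmem hv w hwmem hw
    have E := hbraid s t v w hvmem hwmem
    rw [hcomm] at E
    obtain ⟨lam, hlam, h1, h2⟩ := aux_tmul_eq_tmul hv hw E
    exact ⟨lam, hlam, h1, h2⟩
  obtain ⟨lam, hlam, h1, h2⟩ := key v₀ hv₀mem hv₀ w₀ hw₀mem hw₀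
  refine ⟨hst, lam, hlam, ?_, ?_⟩
  · intro w hw
    by_cases hw0 : w = 0
    · simp [hw0]
    · obtain ⟨μ, hμ, k1, k2⟩ := key v₀ hv₀mem hv₀ w hw hw0
      have : μ⁻¹ = lam⁻¹ := smul_left_injective K hv₀ (k2.symm.trans h2)
      have hμlam : μ = lam := by
        rw [← inv_inv μ, this, inv_inv]
      rw [k1, hμlam]
  · intro v hv
    by_cases hv0 : v = 0
    · simp [hv0]
    · obtain ⟨μ, hμ, k1, k2⟩ := key v hv hv0 w₀ hw₀mem hw₀
      have hμlam : μ = lam := smul_left_injective K hw₀ (k1.symm.trans h1)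
      rw [k2, hμlam]
end

section
/- Let G be a group generated by the union of the supports of Yetter-Drinfeld modules V₁,…,V_θ. Fix i, and suppose V_i is absolutely simple and finite-dimensional, there is a set J ⊆ {1,…,θ}∖{i} such that the supports of V_j and V_k commute pairwise for all j, k ∈ J ∪ {i}, and (id − c²)(V_i ⊗ V_j) = 0 for all j ∉ J ∪ {i}. Then dim V_i = 1. -/
open scoped TensorProduct

section

variable {K G : Type*} [Field K] [Group G]

/-- A Yetter–Drinfeld submodule: a subspace stable under the group action and
generated by its homogeneous components. -/
def IsYDSubmodule {V : Type*} [AddCommGroup V] [Module K V]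
    (ρV : Representation K G V) (gV : G → Submodule K V)
    (p : Submodule K V) : Prop :=
  (∀ g : G, ∀ v ∈ p, ρV g v ∈ p) ∧ p ≤ ⨆ g : G, p ⊓ gV g

/-- Absolute simplicity of a (finite-dimensional) Yetter–Drinfeld module,
via the standard characterization: it is nonzero, has no nontrivial
Yetter–Drinfeld submodules, and every Yetter–Drinfeld endomorphism
(a linear map commuting with the action and preserving the grading) is a
scalar. -/
def IsAbsSimpleYD {V : Type*} [AddCommGroup V] [Module K V]
    (ρV : Representation K G V) (gV : G → Submodule K V) : Prop :=
  (∃ v : V, v ≠ 0) ∧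
    (∀ p : Submodule K V, IsYDSubmodule ρV gV p → p = ⊥ ∨ p = ⊤) ∧
    (∀ f : V →ₗ[K] V, (∀ g : G, f ∘ₗ ρV g = ρV g ∘ₗ f) →
      (∀ g : G, ∀ v ∈ gV g, f v ∈ gV g) → ∃ c : K, f = c • LinearMap.id)

end


section AuxLemmas

open scoped TensorProduct

private lemma aux_tensor {K V W : Type*} [Field K] [AddCommGroup V] [Module K V]
    [AddCommGroup W] [Module K W] {v v' : V} {w w' : W}
    (hv : v ≠ 0) (hw : w ≠ 0) (hv' : v' ≠ 0)
    (h : v ⊗ₜ[K] w = v' ⊗ₜ[K] w') : ∃ c : K, c ≠ 0 ∧ v' = c • v := by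
  by_cases hmem : v' ∈ Submodule.span K {v}
  · obtain ⟨c, hc⟩ := Submodule.mem_span_singleton.mp hmem
    refine ⟨c, ?_, hc.symm⟩
    rintro rfl
    rw [zero_smul] at hc
    exact hv' hc.symm
  · exfalso
    obtain ⟨f, hf1, hf2⟩ := Submodule.exists_dual_map_eq_bot_of_notMem hmem inferInstance
    have hfv : f v = 0 := by
      have : f v ∈ (Submodule.span K ({v} : Set V)).map f :=
        ⟨v, Submodule.mem_span_singleton_self v, rfl⟩
      rw [hf2] at this
      simpa using this
    set F : V ⊗[K] W →ₗ[K] W := TensorProduct.lift ((LinearMap.lsmul K W).comp f) with hF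
    have h2 := congrArg F h
    simp only [hF, TensorProduct.lift.tmul, LinearMap.comp_apply, LinearMap.lsmul_apply,
      hfv, zero_smul] at h2
    have hw' : w' = 0 := (smul_eq_zero.mp h2.symm).elim (fun hc => absurd hc hf1) id
    rw [hw', TensorProduct.tmul_zero] at h
    have hvb : v ∉ (⊥ : Submodule K V) := by simpa using hv
    obtain ⟨g, hg1, _⟩ := Submodule.exists_dual_map_eq_bot_of_notMem hvb inferInstance
    set F' : V ⊗[K] W →ₗ[K] W := TensorProduct.lift ((LinearMap.lsmul K W).comp g) with hF'
    have h3 := congrArg F' h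
    simp only [hF', TensorProduct.lift.tmul, LinearMap.comp_apply, LinearMap.lsmul_apply,
      map_zero] at h3
    exact hw ((smul_eq_zero.mp h3).elim (fun hc => absurd hc hg1) id)

private lemma eigen_scalar {K V : Type*} [Field K] [AddCommGroup V] [Module K V] [Nontrivial V]
    (f : V →ₗ[K] V) (h : ∀ v : V, ∃ c : K, f v = c • v) :
    ∃ c : K, f = c • LinearMap.id := by
  obtain ⟨v₀, hv₀⟩ := exists_ne (0 : V)
  obtain ⟨c, hc⟩ := h v₀
  refine ⟨c, ?_⟩
  ext v
  simp only [LinearMap.smul_apply, LinearMap.id_coe, id_eq]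
  by_cases hsp : v ∈ Submodule.span K {v₀}
  · obtain ⟨a, rfl⟩ := Submodule.mem_span_singleton.mp hsp
    rw [map_smul, hc, smul_comm]
  · obtain ⟨d, hd⟩ := h v
    obtain ⟨e, he⟩ := h (v + v₀)
    rw [map_add, hd, hc, smul_add] at he
    have key : (d - e) • v = (e - c) • v₀ := by
      linear_combination (norm := module) he
    by_cases hde : d = e
    · rw [hde, sub_self, zero_smul] at key
      have hec : e = c := by
        by_contra hec
        refine hv₀ ?_
        rcases smul_eq_zero.mp key.symm with h1 | h1
        · exact absurd (sub_eq_zero.mp h1) hec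
        · exact h1
      rw [hd, hde, hec]
    · exfalso
      apply hsp
      have : v = ((d - e)⁻¹ * (e - c)) • v₀ := by
        rw [mul_smul, ← key, smul_smul, inv_mul_cancel₀ (sub_ne_zero.mpr hde), one_smul]
      exact this ▸ Submodule.smul_mem _ _ (Submodule.mem_span_singleton_self v₀)

end AuxLemmas

/-- Lemma `lem:dimVi=1`: let `V₁,…,V_θ` be Yetter–Drinfeld modules over `G`,
`i` an index, and `J ⊆ {1,…,θ}\{i}` with supports of `V_j, V_k` commuting for
all `j, k ∈ J ∪ {i}`.  If `G` is generated by the union of the supports, `V_i`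
is absolutely simple and finite-dimensional, and `(id − c²)(V_i ⊗ V_j) = 0`
for all `j ∉ J ∪ {i}` (stated on homogeneous elements), then `dim V_i = 1`. -/
theorem stmt_18 {K G : Type*} [Field K] [Group G] [DecidableEq G] {θ : ℕ}
    (V : Fin θ → Type*) [∀ j, AddCommGroup (V j)] [∀ j, Module K (V j)]
    (ρ : ∀ j, Representation K G (V j)) (gr : ∀ j, G → Submodule K (V j))
    (hint : ∀ j, DirectSum.IsInternal (gr j))
    (hcompat : ∀ j (g h : G), ∀ v ∈ gr j h, ρ j g v ∈ gr j (g * h * g⁻¹))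
    (hgen : Subgroup.closure {g : G | ∃ j, gr j g ≠ ⊥} = ⊤)
    (i : Fin θ) (J : Set (Fin θ)) (hiJ : i ∉ J)
    (habs : IsAbsSimpleYD (ρ i) (gr i))
    (hfd : FiniteDimensional K (V i))
    (hcomm : ∀ j k : Fin θ, j ∈ insert i J → k ∈ insert i J →
      ∀ s t : G, gr j s ≠ ⊥ → gr k t ≠ ⊥ → s * t = t * s)
    (hczero : ∀ j : Fin θ, j ∉ insert i J →
      ∀ (g h : G) (v : V i) (w : V j), v ∈ gr i g → w ∈ gr j h →
        (v ⊗ₜ[K] w : V i ⊗[K] V j) = (ρ i (g * h * g⁻¹) v) ⊗ₜ[K] (ρ j g w)) :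
    Module.finrank K (V i) = 1 := by
  classical
  obtain ⟨⟨v₀, hv₀⟩, hsimple, hendo⟩ := habs
  have hnontriv : Nontrivial (V i) := ⟨v₀, 0, hv₀⟩
  have hind := (hint i).submodule_iSupIndep
  have hdisj : ∀ {g g' : G}, g ≠ g' → ∀ x : V i, x ∈ gr i g → x ∈ gr i g' → x = 0 := by
    intro g g' hgg' x hx hx'
    exact (Submodule.disjoint_def.mp (hind.pairwiseDisjoint hgg')) x hx hx'
  have hinj : ∀ g : G, ∀ x : V i, ρ i g x = 0 → x = 0 := by
    intro g x hx
    have h1 : ρ i g⁻¹ (ρ i g x) = x := by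
      rw [← Module.End.mul_apply, ← map_mul, inv_mul_cancel, map_one, Module.End.one_apply]
    rw [hx, map_zero] at h1
    exact h1.symm
  -- every element of the support of `V i` commutes with every generator
  have key_comm : ∀ g : G, gr i g ≠ ⊥ → ∀ (j : Fin θ) (h : G), gr j h ≠ ⊥ → g * h = h * g := by
    intro g hg j h hh
    by_cases hjJ : j ∈ insert i J
    · exact hcomm i j (Set.mem_insert i J) hjJ g h hg hh
    · obtain ⟨v, hv, hv0⟩ := Submodule.exists_mem_ne_zero_of_ne_bot hg
      obtain ⟨w, hw, hw0⟩ := Submodule.exists_mem_ne_zero_of_ne_bot hh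
      have heq := hczero j hjJ g h v w hv hw
      have hv'0 : ρ i (g * h * g⁻¹) v ≠ 0 := fun h0 => hv0 (hinj _ _ h0)
      obtain ⟨c, hc0, hc⟩ := aux_tensor hv0 hw0 hv'0 heq
      have hmem' : ρ i (g * h * g⁻¹) v ∈ gr i ((g * h * g⁻¹) * g * (g * h * g⁻¹)⁻¹) :=
        hcompat i (g * h * g⁻¹) g v hv
      have hmem2 : ρ i (g * h * g⁻¹) v ∈ gr i g := hc ▸ Submodule.smul_mem _ c hv
      by_contra hne'
      have hidx : (g * h * g⁻¹) * g * (g * h * g⁻¹)⁻¹ ≠ g := by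
        intro hE
        apply hne'
        have h1 : (g * h * g⁻¹) * g = g * (g * h * g⁻¹) := by
          rw [mul_inv_eq_iff_eq_mul] at hE
          exact hE
        have h2 : g * h = g * (g * h * g⁻¹) := by
          calc g * h = (g * h * g⁻¹) * g := by group
          _ = g * (g * h * g⁻¹) := h1
        have h3 : h = g * h * g⁻¹ := mul_left_cancel h2
        have h4 : h * g = g * h := by
          conv_lhs => rw [h3]
          group
        exact h4.symm
      exact hv'0 (hdisj hidx _ hmem' hmem2)
  -- a support element g₀ of V i exists
  have hex : ∃ g : G, gr i g ≠ ⊥ := by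
    by_contra hall
    push_neg at hall
    have htb : (⊤ : Submodule K (V i)) = ⊥ := by
      rw [← (hint i).submodule_iSup_eq_top]
      simp [hall]
    have hb : v₀ ∈ (⊥ : Submodule K (V i)) := by rw [← htb]; trivial
    exact hv₀ (by simpa using hb)
  obtain ⟨g₀, hg₀⟩ := hex
  -- g₀ is central
  have hcent : ∀ h : G, h * g₀ = g₀ * h := by
    have hle : Subgroup.closure {g : G | ∃ j, gr j g ≠ ⊥} ≤ Subgroup.centralizer {g₀} := by
      rw [Subgroup.closure_le]
      rintro h ⟨j, hj⟩
      exact Subgroup.mem_centralizer_iff.mpr (by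
        rintro x rfl
        exact key_comm x hg₀ j h hj)
    intro h
    have hm : h ∈ Subgroup.centralizer {g₀} := hle (by rw [hgen]; trivial)
    exact (Subgroup.mem_centralizer_iff.mp hm g₀ rfl).symm
  -- the support of V i is exactly {g₀}
  have hg₀top : gr i g₀ = ⊤ := by
    have hyd : IsYDSubmodule (ρ i) (gr i) (gr i g₀) := by
      constructor
      · intro g v hv
        have hmv := hcompat i g g₀ v hv
        have he : g * g₀ * g⁻¹ = g₀ := by rw [hcent g]; group
        rwa [he] at hmv
      · intro x hx
        exact (le_iSup (fun g => gr i g₀ ⊓ gr i g) g₀) (Submodule.mem_inf.mpr ⟨hx, hx⟩)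
    rcases hsimple (gr i g₀) hyd with hb | ht
    · exact absurd hb hg₀
    · exact ht
  have hbot : ∀ g : G, g ≠ g₀ → gr i g = ⊥ := by
    intro g hgg
    rw [Submodule.eq_bot_iff]
    intro x hx
    exact hdisj hgg x hx (by rw [hg₀top]; trivial)
  -- any linear map preserves the (trivial) grading
  have hgrpres : ∀ (f : V i →ₗ[K] V i), ∀ g : G, ∀ v ∈ gr i g, f v ∈ gr i g := by
    intro f g v hv
    by_cases hgg : g = g₀
    · subst hgg; rw [hg₀top]; trivial
    · rw [hbot g hgg] at hv ⊢
      simp only [Submodule.mem_bot] at hv ⊢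
      rw [hv, map_zero]
  -- generators outside J ∪ {i} act by scalars
  have hscal_out : ∀ (j : Fin θ), j ∉ insert i J → ∀ h : G, gr j h ≠ ⊥ →
      ∃ c : K, ρ i h = c • LinearMap.id := by
    intro j hj h hh
    obtain ⟨w, hw, hw0⟩ := Submodule.exists_mem_ne_zero_of_ne_bot hh
    apply eigen_scalar
    intro v
    rcases eq_or_ne v 0 with rfl | hv0
    · exact ⟨0, by simp⟩
    · have hvmem : v ∈ gr i g₀ := by rw [hg₀top]; trivial
      have heq := hczero j hj g₀ h v w hvmem hw
      have hcomm0 : g₀ * h * g₀⁻¹ = h := by rw [← hcent h]; group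
      rw [hcomm0] at heq
      have hv'0 : ρ i h v ≠ 0 := fun h0 => hv0 (hinj _ _ h0)
      obtain ⟨c, _, hc⟩ := aux_tensor hv0 hw0 hv'0 heq
      exact ⟨c, hc⟩
  -- commuting with all generators implies commuting with everything
  have hcomm_clos : ∀ h : G, (∀ x : G, (∃ j, gr j x ≠ ⊥) → ρ i h * ρ i x = ρ i x * ρ i h) →
      ∀ g : G, ρ i h * ρ i g = ρ i g * ρ i h := by
    intro h hbase g
    have hg : g ∈ Subgroup.closure {g : G | ∃ j, gr j g ≠ ⊥} := by rw [hgen]; trivial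
    induction hg using Subgroup.closure_induction with
    | mem x hx => exact hbase x hx
    | one => rw [map_one, mul_one, one_mul]
    | mul x y hx hy ihx ihy =>
        rw [map_mul, ← mul_assoc, ihx, mul_assoc, ihy, ← mul_assoc]
    | inv x hx ihx =>
        have h1 : ρ i x⁻¹ * ρ i x = 1 := by rw [← map_mul, inv_mul_cancel, map_one]
        have h2 : ρ i x * ρ i x⁻¹ = 1 := by rw [← map_mul, mul_inv_cancel, map_one]
        calc ρ i h * ρ i x⁻¹ = ρ i x⁻¹ * ρ i x * (ρ i h * ρ i x⁻¹) := by rw [h1, one_mul]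
        _ = ρ i x⁻¹ * (ρ i x * ρ i h) * ρ i x⁻¹ := by
            rw [mul_assoc, mul_assoc, mul_assoc]
        _ = ρ i x⁻¹ * (ρ i h * ρ i x) * ρ i x⁻¹ := by rw [ihx]
        _ = ρ i x⁻¹ * ρ i h * (ρ i x * ρ i x⁻¹) := by
            rw [mul_assoc, mul_assoc, mul_assoc]
        _ = ρ i x⁻¹ * ρ i h := by rw [h2, mul_one]
  -- scalars commute with everything
  have hscal_comm : ∀ (x : G) (c : K), ρ i x = c • LinearMap.id →
      ∀ f : V i →ₗ[K] V i, f * ρ i x = ρ i x * f := by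
    intro x c hc f
    rw [hc]
    ext v
    simp [Module.End.mul_apply, map_smul]
  -- every generator acts by a scalar
  have hscal_gen : ∀ (x : G), (∃ j, gr j x ≠ ⊥) → ∃ c : K, ρ i x = c • LinearMap.id := by
    rintro h ⟨j, hh⟩
    by_cases hj : j ∈ insert i J
    · have hcomm_all := hcomm_clos h (by
        rintro x ⟨k, hk⟩
        by_cases hkJ : k ∈ insert i J
        · have := hcomm j k hj hkJ h x hh hk
          rw [← map_mul, ← map_mul, this]
        · obtain ⟨c, hc⟩ := hscal_out k hkJ x hk
          exact hscal_comm x c hc (ρ i h))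
      exact hendo (ρ i h) (fun g => hcomm_all g) (hgrpres (ρ i h))
    · exact hscal_out j hj h hh
  -- every group element acts by a scalar
  have hscal_all : ∀ h : G, ∃ c : K, ρ i h = c • LinearMap.id := by
    intro h
    have hcomm_all := hcomm_clos h (by
      intro x hx
      obtain ⟨c, hc⟩ := hscal_gen x hx
      exact hscal_comm x c hc (ρ i h))
    exact hendo (ρ i h) (fun g => hcomm_all g) (hgrpres (ρ i h))
  -- hence any line is a YD submodule, so V i is one-dimensional
  have hspan : Submodule.span K ({v₀} : Set (V i)) = ⊤ := by
    have hyd : IsYDSubmodule (ρ i) (gr i) (Submodule.span K {v₀}) := by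
      constructor
      · intro g v hv
        obtain ⟨c, hc⟩ := hscal_all g
        rw [hc]
        simpa using Submodule.smul_mem _ c hv
      · intro x hx
        exact (le_iSup (fun g => Submodule.span K ({v₀} : Set (V i)) ⊓ gr i g) g₀)
          (Submodule.mem_inf.mpr ⟨hx, by rw [hg₀top]; trivial⟩)
    rcases hsimple (Submodule.span K {v₀}) hyd with hb | ht
    · exfalso
      rw [Submodule.span_singleton_eq_bot] at hb
      exact hv₀ hb
    · exact ht
  have h1 : Module.finrank K (Submodule.span K ({v₀} : Set (V i))) = 1 :=
    finrank_span_singleton hv₀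
  rw [hspan] at h1
  rwa [finrank_top] at h1
end

section
/- Let G be a group, s ∈ G with s^G = {s, εs} for some ε ≠ 1, t ∈ Z(G) central, σ a character of the centralizer G^s, τ a character of G, and let V ≅ M(s, σ), W ≅ M(t, τ) be the corresponding Yetter-Drinfeld modules (dim V = 2, dim W = 1). Then (ad V)(W) ≠ 0 if and only if σ(t)τ(s) ≠ 1; and in that case (ad V)(W) ≅ M(st, τ₁) where τ₁ is the character of G^s = G^{st} given by τ₁(h) = σ(h)τ(h). -/
/-- Lemma `lem:X1`: let `G` be a group, `s ∈ G` with `s^G = {s, εs}`, `ε ≠ 1`,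
`t ∈ Z(G)`, `σ` a character of the centralizer `G^s`, `τ` a character of `G`,
and `V ≅ M(s,σ)` (so `dim V_s = 1`, the centralizer acts on `V_s` by `σ`, and
`V` is generated by the orbit of `V_s`), `W ≅ M(t,τ)` one-dimensional.
Since `W` is one-dimensional of central degree `t` with `G`-action `τ`, we
identify `V ⊗ W ≅ V`, under which `(ad V)(W) ≅ (id − c²)(V ⊗ W)` corresponds
to the span `X₁` of the elements `v − τ(g)·(t·v)` for homogeneous `v ∈ V_g`.
The claim: `X₁ ≠ 0 ↔ σ(t)τ(s) ≠ 1`, and in that case `X₁` is all of `V ⊗ W`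
(`= M(st, τ₁)` with support `{st, εst}`): `G^{st} = G^s` and the combined
action of `h ∈ G^{st}` on the degree-`st` component (namely `τ(h)·ρ(h)`) is
by the scalar `τ₁(h) = σ(h)τ(h)`. -/
theorem stmt_19 {K G V : Type*} [Field K] [Group G] [DecidableEq G]
    [AddCommGroup V] [Module K V]
    (ρ : Representation K G V) (gr : G → Submodule K V)
    (hint : DirectSum.IsInternal gr)
    (hcompat : ∀ g h : G, ∀ v ∈ gr h, ρ g v ∈ gr (g * h * g⁻¹))
    (s ε t : G) (hε : ε ≠ 1)
    (hconj : {x : G | ∃ g : G, g * s * g⁻¹ = x} = {s, ε * s})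
    (ht : t ∈ Subgroup.center G)
    (htc : t ∈ Subgroup.centralizer ({s} : Set G))
    (σ : ↥(Subgroup.centralizer ({s} : Set G)) →* K) (τ : G →* K)
    (hσ0 : ∀ h, σ h ≠ 0) (hτ0 : ∀ g, τ g ≠ 0)
    (hsupp : ∀ g : G, gr g ≠ ⊥ → g = s ∨ g = ε * s)
    (hs : gr s ≠ ⊥)
    (hdim : Module.finrank K ↥(gr s) = 1)
    (hσact : ∀ h : ↥(Subgroup.centralizer ({s} : Set G)),
      ∀ v ∈ gr s, ρ (↑h) v = σ h • v)
    (hgenV : Submodule.span K {w : V | ∃ (g : G) (u : V), u ∈ gr s ∧ w = ρ g u} = ⊤) :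
    (Submodule.span K {w : V | ∃ (g : G) (v : V), v ∈ gr g ∧ w = v - τ g • ρ t v}
        ≠ ⊥ ↔ σ ⟨t, htc⟩ * τ s ≠ 1) ∧
    (σ ⟨t, htc⟩ * τ s ≠ 1 →
      Submodule.span K {w : V | ∃ (g : G) (v : V), v ∈ gr g ∧ w = v - τ g • ρ t v}
          = ⊤ ∧
      Subgroup.centralizer ({s * t} : Set G) = Subgroup.centralizer ({s} : Set G) ∧
      ∀ (h : G) (hh : h ∈ Subgroup.centralizer ({s} : Set G)),
        ∀ v ∈ gr s, τ h • ρ h v = (σ ⟨h, hh⟩ * τ h) • v) := by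
  classical
  have hcent : ∀ g : G, g * t = t * g := Subgroup.mem_center_iff.mp ht
  set c : K := σ ⟨t, htc⟩ * τ s with hc
  -- ρ t acts as the scalar σ(t) on all of V
  have hρt : ∀ v : V, ρ t v = σ ⟨t, htc⟩ • v := by
    intro v
    have hv : v ∈ Submodule.span K {w : V | ∃ (g : G) (u : V), u ∈ gr s ∧ w = ρ g u} := by
      rw [hgenV]; exact Submodule.mem_top
    induction hv using Submodule.span_induction with
    | mem w hw =>
      obtain ⟨g, u, hu, rfl⟩ := hw
      have : ρ t (ρ g u) = ρ g (ρ t u) := by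
        rw [← Module.End.mul_apply, ← map_mul, ← hcent, map_mul, Module.End.mul_apply]
      rw [this, hσact ⟨t, htc⟩ u hu, map_smul]
    | zero => simp
    | add x y _ _ hx hy => rw [map_add, hx, hy, smul_add]
    | smul a x _ hx => rw [map_smul, hx, smul_comm]
  -- τ (ε * s) = τ s
  have hτεs : τ (ε * s) = τ s := by
    have hmem : (ε * s) ∈ {x : G | ∃ g : G, g * s * g⁻¹ = x} := by
      rw [hconj]; right; rfl
    obtain ⟨g, hg⟩ := hmem
    have : τ g * τ s * τ g⁻¹ = τ (ε * s) := by
      rw [← map_mul, ← map_mul, hg]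
    rw [← this, mul_comm (τ g) (τ s), mul_assoc, ← map_mul, mul_inv_cancel, map_one, mul_one]
  -- each element of the generating set is (1 - c) • v
  have hw : ∀ (g : G) (v : V), v ∈ gr g → v - τ g • ρ t v = (1 - c) • v := by
    intro g v hv
    by_cases h0 : v = 0
    · simp [h0]
    · have hg : g = s ∨ g = ε * s := by
        refine hsupp g ?_
        intro hbot
        rw [hbot, Submodule.mem_bot] at hv
        exact h0 hv
      have hτg : τ g = τ s := by
        rcases hg with rfl | rfl
        · rfl
        · exact hτεs
      rw [hρt, hτg, smul_smul, sub_smul, one_smul, hc, mul_comm]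
  set X := Submodule.span K {w : V | ∃ (g : G) (v : V), v ∈ gr g ∧ w = v - τ g • ρ t v}
    with hX
  have htop : c ≠ 1 → X = ⊤ := by
    intro hc1
    rw [eq_top_iff, ← hint.submodule_iSup_eq_top]
    refine iSup_le fun g => fun v hv => ?_
    have hwX : v - τ g • ρ t v ∈ X := Submodule.subset_span ⟨g, v, hv, rfl⟩
    rw [hw g v hv] at hwX
    have : (1 - c)⁻¹ • ((1 - c) • v) ∈ X := Submodule.smul_mem _ _ hwX
    rwa [smul_smul, inv_mul_cancel₀ (sub_ne_zero.mpr (Ne.symm hc1)), one_smul] at this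
  have hbot : c = 1 → X = ⊥ := by
    intro hc1
    rw [hX, Submodule.span_eq_bot]
    rintro w ⟨g, v, hv, rfl⟩
    rw [hw g v hv, hc1, sub_self, zero_smul]
  have hVne : (⊤ : Submodule K V) ≠ ⊥ := by
    intro h
    exact hs (le_bot_iff.mp (h ▸ le_top))
  refine ⟨⟨fun hX0 hc1 => hX0 (hbot hc1), fun hc1 => (htop hc1) ▸ hVne⟩, fun hc1 => ?_⟩
  refine ⟨htop hc1, ?_, ?_⟩
  · ext h
    simp only [Subgroup.mem_centralizer_iff, Set.mem_singleton_iff, forall_eq]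
    constructor
    · intro hcomm
      refine mul_right_cancel (b := t) ?_
      calc s * h * t = s * (t * h) := by rw [mul_assoc, hcent h]
        _ = h * (s * t) := by rw [← mul_assoc, hcomm]
        _ = h * s * t := by rw [← mul_assoc]
    · intro hcomm
      calc s * t * h = s * (h * t) := by rw [mul_assoc, ← hcent h]
        _ = h * s * t := by rw [← mul_assoc, hcomm]
        _ = h * (s * t) := by rw [mul_assoc]
  · intro h hh v hv
    rw [hσact ⟨h, hh⟩ v hv, smul_smul, mul_comm]
end
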